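/- arXiv:1302.0301 — 12 statements merged into one kernel-verified Lean document; each statement's English description precedes it below -/
import Mathlib

section
/- Let K be a field of characteristic not 2, n ≥ 3, and let V be a linear subspace of M_n(K) such that every matrix in V has at most 2 eigenvalues in K. If A and B are matrices in V with rank at most 1 and trace 0, then tr(AB) = 0. -/
/-!
Write `A = u vᵀ` and `B = p qᵀ`, so that `tr A = u ⬝ᵥ v`, `tr B = p ⬝ᵥ q` and
`c := tr (A B) = (v ⬝ᵥ p) (u ⬝ᵥ q)`. The matrix `M = A + c B` lies in `V`. Since `n ≥ 3`, some
`w ≠ 0` is orthogonal to both `v` and `q`, so `0` is an eigenvalue of `M`; and since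
`tr A = tr B = 0`, the vectors `u ± (u ⬝ᵥ q) p` are eigenvectors of `M` for `± c`.
If `c ≠ 0` and `2 ≠ 0`, then `0, c, -c` are three distinct eigenvalues.
-/

open Matrix Polynomial

namespace Matrix

variable {K : Type*} [Field K] {m n : Type*} [Fintype n]

theorem exists_eq_vecMulVec_of_rank_le_one [DecidableEq n] {A : Matrix m n K} (h : A.rank ≤ 1) :
    ∃ u v, A = vecMulVec u v := by
  obtain ⟨u, hu⟩ := (Submodule.finrank_le_one_iff_isPrincipal _).mp h
  have hcol : ∀ j, ∃ a : K, a • u = A *ᵥ Pi.single j 1 := fun j =>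
    Submodule.mem_span_singleton.mp (hu ▸ LinearMap.mem_range_self A.mulVecLin (Pi.single j 1))
  choose v hv using hcol
  refine ⟨u, v, ext fun i j => ?_⟩
  rw [vecMulVec_apply, mul_comm, ← smul_eq_mul, ← Pi.smul_apply, hv, mulVec_single_one]
  rfl

theorem isRoot_charpoly_of_mulVec_eq_smul [DecidableEq n] {A : Matrix n n K} {w : n → K} {μ : K}
    (hw : w ≠ 0) (h : A *ᵥ w = μ • w) : A.charpoly.IsRoot μ := by
  rw [← mem_spectrum_iff_isRoot_charpoly, ← spectrum_toLin']
  exact (Module.End.hasEigenvalue_of_hasEigenvector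
    ⟨Module.End.mem_eigenspace_iff.mpr (by simpa using h), hw⟩).mem_spectrum

theorem exists_ne_zero_dotProduct_eq_zero (hn : 2 < Fintype.card n) (v q : n → K) :
    ∃ w ≠ 0, v ⬝ᵥ w = 0 ∧ q ⬝ᵥ w = 0 := by
  have hker : LinearMap.ker (of ![v, q]).mulVecLin ≠ ⊥ :=
    LinearMap.ker_ne_bot_of_finrank_lt (by simpa using hn)
  obtain ⟨w, hw, hw0⟩ := Submodule.exists_mem_ne_zero_of_ne_bot hker
  have hw' := LinearMap.mem_ker.mp hw
  exact ⟨w, hw0, by simpa using congrFun hw' 0, by simpa using congrFun hw' 1⟩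

theorem trace_vecMulVec_mul_vecMulVec (u v p q : n → K) :
    (vecMulVec u v * vecMulVec p q).trace = (v ⬝ᵥ p) * (u ⬝ᵥ q) := by
  rw [vecMulVec_mul_vecMulVec, trace_vecMulVec, dotProduct_smul, smul_eq_mul]

theorem vecMulVec_add_smul_vecMulVec_mulVec (u v p q w : n → K) (c : K) :
    (vecMulVec u v + c • vecMulVec p q) *ᵥ w = (v ⬝ᵥ w) • u + (c * (q ⬝ᵥ w)) • p := by
  rw [add_mulVec, smul_mulVec, vecMulVec_mulVec, vecMulVec_mulVec, op_smul_eq_smul,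
    op_smul_eq_smul, smul_smul]

variable [DecidableEq n] {u v p q : n → K}

theorem isRoot_charpoly_vecMulVec_add_smul_vecMulVec_zero (hn : 2 < Fintype.card n) (c : K) :
    (vecMulVec u v + c • vecMulVec p q).charpoly.IsRoot 0 := by
  obtain ⟨w, hw, hvw, hqw⟩ := exists_ne_zero_dotProduct_eq_zero hn v q
  refine isRoot_charpoly_of_mulVec_eq_smul hw ?_
  rw [vecMulVec_add_smul_vecMulVec_mulVec, hvw, hqw]
  simp

theorem isRoot_charpoly_vecMulVec_add_smul_vecMulVec (huv : u ⬝ᵥ v = 0) (hpq : p ⬝ᵥ q = 0)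
    (huq : u ⬝ᵥ q ≠ 0) {ε : K} (hε : ε * ε = 1) :
    (vecMulVec u v + ((v ⬝ᵥ p) * (u ⬝ᵥ q)) • vecMulVec p q).charpoly.IsRoot
      (ε * ((v ⬝ᵥ p) * (u ⬝ᵥ q))) := by
  set r := u ⬝ᵥ q
  set c := (v ⬝ᵥ p) * r
  have hv : v ⬝ᵥ (u + (ε * r) • p) = ε * c := by
    rw [dotProduct_add, dotProduct_smul, dotProduct_comm, huv, smul_eq_mul]; ring
  have hq : q ⬝ᵥ (u + (ε * r) • p) = r := by
    rw [dotProduct_add, dotProduct_smul, dotProduct_comm q p, hpq, dotProduct_comm]; simp [r]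
  refine isRoot_charpoly_of_mulVec_eq_smul (w := u + (ε * r) • p) ?_ ?_
  · intro hw
    rw [hw, dotProduct_zero] at hq
    exact huq hq.symm
  · rw [vecMulVec_add_smul_vecMulVec_mulVec, hv, hq]
    linear_combination (norm := module) (-(c * r)) • hε • p

end Matrix

theorem Polynomial.three_le_ncard_setOf_isRoot {K : Type*} [Field K] {P : K[X]} (hP : P ≠ 0)
    (hK : (2 : K) ≠ 0) {c : K} (hc : c ≠ 0) (h₀ : P.IsRoot 0) (hpos : P.IsRoot c)
    (hneg : P.IsRoot (-c)) : 3 ≤ {x | P.IsRoot x}.ncard := by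
  have hcc : c ≠ -c := fun h => hc <| (mul_eq_zero.mp (by linear_combination h)).resolve_left hK
  calc 3 = ({0, c, -c} : Set K).ncard := by
        rw [Set.ncard_insert_of_notMem (by simp [hc, hc.symm]), Set.ncard_pair hcc]
    _ ≤ {x | P.IsRoot x}.ncard := by
        refine Set.ncard_le_ncard ?_ (finite_setOfPred_isRoot hP)
        rintro x (rfl | rfl | rfl) <;> assumption

/-- If `K` has characteristic not 2, `n ≥ 3`, and `V` is a linear subspace of
`M_n(K)` in which every matrix has at most 2 distinct eigenvalues in `K`, then for `A, B ∈ V`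
of rank at most 1 and trace 0 one has `tr(AB) = 0`. -/
theorem stmt0 {K : Type*} [Field K] (hK : (2 : K) ≠ 0) (n : ℕ) (hn : 3 ≤ n)
    (V : Submodule K (Matrix (Fin n) (Fin n) K))
    (hspec : ∀ M ∈ V, {x : K | (Matrix.charpoly M).IsRoot x}.ncard ≤ 2)
    (A B : Matrix (Fin n) (Fin n) K) (hA : A ∈ V) (hB : B ∈ V)
    (hArk : A.rank ≤ 1) (hBrk : B.rank ≤ 1)
    (hAtr : A.trace = 0) (hBtr : B.trace = 0) :
    (A * B).trace = 0 := by
  by_contra hc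
  obtain ⟨u, v, rfl⟩ := exists_eq_vecMulVec_of_rank_le_one hArk
  obtain ⟨p, q, rfl⟩ := exists_eq_vecMulVec_of_rank_le_one hBrk
  rw [trace_vecMulVec] at hAtr hBtr
  rw [trace_vecMulVec_mul_vecMulVec] at hc
  have hM : vecMulVec u v + ((v ⬝ᵥ p) * (u ⬝ᵥ q)) • vecMulVec p q ∈ V :=
    V.add_mem hA (V.smul_mem _ hB)
  have hr : u ⬝ᵥ q ≠ 0 := right_ne_zero_of_mul hc
  have hpos := isRoot_charpoly_vecMulVec_add_smul_vecMulVec hAtr hBtr hr (ε := 1) (by ring)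
  have hneg := isRoot_charpoly_vecMulVec_add_smul_vecMulVec hAtr hBtr hr (ε := -1) (by ring)
  rw [one_mul] at hpos
  rw [neg_one_mul] at hneg
  have hzero := isRoot_charpoly_vecMulVec_add_smul_vecMulVec_zero (u := u) (v := v) (p := p)
    (q := q) (by rw [Fintype.card_fin]; omega) ((v ⬝ᵥ p) * (u ⬝ᵥ q))
  have hthree := three_le_ncard_setOf_isRoot (charpoly_monic _).ne_zero hK hc hzero hpos hneg
  have htwo := hspec _ hM
  omega
end

section
/- Let K be a field and p a positive integer with |K| > p. Let E be an n-dimensional vector space over K, and (E_i)_{i∈I} a family of (n-1)p+1 linear subspaces of E in which exactly p+1 subspaces have dimension n-1 and, for each k in {1,...,n-2}, exactly p subspaces have dimension k. Then E is not contained in the union of the E_i. -/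
/-!
Over an infinite field no vector space is a finite union of proper subspaces, and the dimension
count forces every `E_i` to be proper. Over a finite field with `q > p` elements, take for `H` one
of the hyperplanes `E_i`. A subspace of dimension `d` meets `H` in dimension at least `d - 1`, so
it has at most `(q - 1) q^(d-1)` points off `H`; the other `E_i` therefore cover at most
`(q - 1) p (1 + q + ⋯ + q^(n-2)) = p (q^(n-1) - 1) < (q - 1) q^(n-1) = |E \ H|` points of `E \ H`.
-/

open Finset Module

lemma mul_geom_sum_lt {p q : ℕ} (hpq : p < q) (m : ℕ) : p * ∑ j ∈ range m, q ^ j < q ^ m := by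
  have hq : 1 ≤ q := by omega
  calc p * ∑ j ∈ range m, q ^ j ≤ (q - 1) * ∑ j ∈ range m, q ^ j := by gcongr; omega
    _ = q ^ m - 1 := by rw [mul_comm, geom_sum_mul_of_one_le hq]
    _ < q ^ m := Nat.sub_lt (Nat.one_le_pow _ _ hq) one_pos

section DimensionProfile

variable {I : Type*} {d : I → ℕ} {p n : ℕ}

lemma card_fiber_eq_of_mem_Ico (htop : Nat.card {i // d i = n - 1} = p + 1)
    (hk : ∀ k : ℕ, 1 ≤ k → k ≤ n - 2 → Nat.card {i // d i = k} = p) :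
    ∀ k ∈ Ico 1 n, Nat.card {i // d i = k} = p + if k = n - 1 then 1 else 0 := by
  intro k hkn
  rw [mem_Ico] at hkn
  split_ifs with h
  · rw [h, htop]
  · exact hk k hkn.1 (by omega)

variable [Fintype I]

lemma mem_of_sum_card_fiber_eq_card {s : Finset ℕ}
    (h : ∑ k ∈ s, Nat.card {i // d i = k} = Fintype.card I) (i : I) : d i ∈ s := by
  classical
  simp only [Nat.card_eq_fintype_card, Fintype.card_subtype] at h
  rw [sum_card_fiberwise_eq_card_filter, ← card_univ, card_filter_eq_iff] at h
  exact h i (mem_univ i)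

lemma sum_comp_eq_sum_card_fiber_smul {M : Type*} [AddCommMonoid M] {s : Finset ℕ}
    (hd : ∀ i, d i ∈ s) (f : ℕ → M) :
    ∑ i, f (d i) = ∑ k ∈ s, Nat.card {i // d i = k} • f k := by
  classical
  rw [← sum_fiberwise_of_maps_to' fun i _ => hd i]
  simp only [sum_const, Nat.card_eq_fintype_card, Fintype.card_subtype]

lemma two_le_of_card_fiber (htop : Nat.card {i // d i = n - 1} = p + 1) (hp : 0 < p)
    (hI : Fintype.card I = (n - 1) * p + 1) : 2 ≤ n := by
  have : Nat.card {i // d i = n - 1} ≤ Fintype.card I := by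
    rw [Nat.card_eq_fintype_card]; exact Fintype.card_subtype_le _
  by_contra h
  rw [htop, hI, show n - 1 = 0 by omega] at this
  omega

lemma mem_Ico_of_card_fiber_eq (hn : 2 ≤ n)
    (hfib : ∀ k ∈ Ico 1 n, Nat.card {i // d i = k} = p + if k = n - 1 then 1 else 0)
    (hI : Fintype.card I = (n - 1) * p + 1) (i : I) : d i ∈ Ico 1 n := by
  refine mem_of_sum_card_fiber_eq_card ?_ i
  rw [sum_congr rfl hfib, sum_add_distrib, sum_const, Nat.card_Ico, sum_ite_eq',
    if_pos (by simp; omega), hI, smul_eq_mul]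

lemma sum_comp_eq_of_card_fiber_eq {M : Type*} [AddCommMonoid M] (hn : 2 ≤ n)
    (hd : ∀ i, d i ∈ Ico 1 n)
    (hfib : ∀ k ∈ Ico 1 n, Nat.card {i // d i = k} = p + if k = n - 1 then 1 else 0)
    (f : ℕ → M) : ∑ i, f (d i) = p • ∑ k ∈ Ico 1 n, f k + f (n - 1) := by
  rw [sum_comp_eq_sum_card_fiber_smul hd, sum_congr rfl fun k hkn => by rw [hfib k hkn]]
  simp only [add_smul, sum_add_distrib, ← smul_sum, ite_smul, one_smul, zero_smul, sum_ite_eq']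
  rw [if_pos (by simp; omega)]

end DimensionProfile

section FiniteField

variable {K E : Type*} [Field K] [AddCommGroup E] [Module K E] [FiniteDimensional K E]

lemma Submodule.ncard_eq_pow_finrank (S : Submodule K E) :
    (S : Set E).ncard = Nat.card K ^ finrank K S := by
  rw [← Nat.card_coe_set_eq]
  exact Module.natCard_eq_pow_finrank (K := K) (V := S)

variable [Finite K]

lemma ncard_sdiff_hyperplane_le (S H : Submodule K E) (hH : finrank K H + 1 = finrank K E) :
    ((S : Set E) \ H).ncard ≤ (Nat.card K - 1) * Nat.card K ^ (finrank K S - 1) := by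
  have : Finite E := Module.finite_of_finite K
  have hdim : finrank K S ≤ finrank K ↥(S ⊓ H) + 1 := by
    have := Submodule.finrank_sup_add_finrank_inf_eq S H
    have := Submodule.finrank_le (S ⊔ H)
    have := Submodule.finrank_le H
    omega
  have hsplit := Set.ncard_inter_add_ncard_sdiff_eq_ncard (S : Set E) H
  rw [← Submodule.coe_inf, Submodule.ncard_eq_pow_finrank, Submodule.ncard_eq_pow_finrank] at hsplit
  have hq : 0 < Nat.card K := Nat.card_pos
  have hpow : Nat.card K ^ (finrank K S - 1) ≤ Nat.card K ^ finrank K ↥(S ⊓ H) :=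
    Nat.pow_le_pow_right hq (by omega)
  calc ((S : Set E) \ H).ncard = Nat.card K ^ finrank K S - Nat.card K ^ finrank K ↥(S ⊓ H) := by
        omega
    _ ≤ Nat.card K ^ finrank K S - Nat.card K ^ (finrank K S - 1) := Nat.sub_le_sub_left hpow _
    _ ≤ (Nat.card K - 1) * Nat.card K ^ (finrank K S - 1) := by
        rw [Nat.sub_one_mul, ← pow_succ']
        exact Nat.sub_le_sub_right (Nat.pow_le_pow_right hq (by omega)) _

lemma pow_finrank_le_sum_of_compl_subset {ι : Type*} (s : Finset ι) (Es : ι → Submodule K E)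
    (H : Submodule K E) (hH : finrank K H + 1 = finrank K E)
    (hcover : (H : Set E)ᶜ ⊆ ⋃ i ∈ s, (Es i : Set E)) :
    Nat.card K ^ finrank K H ≤ ∑ i ∈ s, Nat.card K ^ (finrank K (Es i) - 1) := by
  have : Finite E := Module.finite_of_finite K
  have hq : 1 < Nat.card K := Finite.one_lt_card
  have hcompl : ((H : Set E)ᶜ).ncard = (Nat.card K - 1) * Nat.card K ^ finrank K H := by
    have := Set.ncard_add_ncard_compl (H : Set E)
    rw [Submodule.ncard_eq_pow_finrank, Module.natCard_eq_pow_finrank (K := K) (V := E), ← hH,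
      pow_succ'] at this
    rw [Nat.sub_one_mul]
    omega
  refine le_of_mul_le_mul_left ?_ (Nat.sub_pos_of_lt hq)
  calc (Nat.card K - 1) * Nat.card K ^ finrank K H = ((H : Set E)ᶜ).ncard := hcompl.symm
    _ ≤ (⋃ i ∈ s, ((Es i : Set E) \ H)).ncard := by
        refine Set.ncard_le_ncard fun x hx => ?_
        obtain ⟨i, hi, hxi⟩ := Set.mem_iUnion₂.mp (hcover hx)
        exact Set.mem_iUnion₂.mpr ⟨i, hi, hxi, hx⟩
    _ ≤ ∑ i ∈ s, ((Es i : Set E) \ H).ncard := s.set_ncard_biUnion_le _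
    _ ≤ ∑ i ∈ s, (Nat.card K - 1) * Nat.card K ^ (finrank K (Es i) - 1) :=
        sum_le_sum fun i _ => ncard_sdiff_hyperplane_le (Es i) H hH
    _ = _ := (mul_sum ..).symm

end FiniteField

/-- Covering lemma. If `|K| > p`, `E` is an `n`-dimensional `K`-vector space and
`(E_i)` is a family of `(n-1)p + 1` subspaces of which exactly `p+1` have dimension `n-1` and,
for each `k ∈ {1,…,n-2}`, exactly `p` have dimension `k`, then `E` is not contained in the
union of the `E_i`. -/
theorem stmt2 {K : Type*} [Field K] (p n : ℕ) (hp : 0 < p)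
    (hK : (p : Cardinal) < Cardinal.mk K)
    (E : Type*) [AddCommGroup E] [Module K E] (hE : Module.finrank K E = n)
    (I : Type*) [Fintype I] (hI : Fintype.card I = (n - 1) * p + 1)
    (Es : I → Submodule K E)
    (htop : Nat.card {i : I // Module.finrank K (Es i) = n - 1} = p + 1)
    (hk : ∀ k : ℕ, 1 ≤ k → k ≤ n - 2 →
      Nat.card {i : I // Module.finrank K (Es i) = k} = p) :
    ∃ x : E, ∀ i : I, x ∉ Es i := by
  classical
  have hn : 2 ≤ n := two_le_of_card_fiber htop hp hI
  have hfib := card_fiber_eq_of_mem_Ico htop hk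
  have hd : ∀ i, finrank K (Es i) ∈ Ico 1 n := mem_Ico_of_card_fiber_eq hn hfib hI
  have : FiniteDimensional K E := Module.finite_of_finrank_pos (by omega)
  by_contra! hcover
  cases finite_or_infinite K
  · have hpq : p < Nat.card K := by rwa [← Nat.cast_card, Nat.cast_lt] at hK
    obtain ⟨i₀, hi₀⟩ : ∃ i, finrank K (Es i) = n - 1 := by
      have : 0 < Nat.card {i // finrank K (Es i) = n - 1} := by omega
      simpa using (Nat.card_pos_iff.mp this).1
    have hcov : (Es i₀ : Set E)ᶜ ⊆ ⋃ i ∈ univ.erase i₀, (Es i : Set E) := fun x hx => by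
      obtain ⟨i, hi⟩ := hcover x
      exact Set.mem_iUnion₂.mpr ⟨i, mem_erase.mpr ⟨by rintro rfl; exact hx hi, mem_univ _⟩, hi⟩
    have hbound := pow_finrank_le_sum_of_compl_subset _ Es (Es i₀) (by omega) hcov
    have hrest : ∑ i ∈ univ.erase i₀, Nat.card K ^ (finrank K (Es i) - 1)
        = p * ∑ j ∈ range (n - 1), Nat.card K ^ j := by
      have hsum := sum_comp_eq_of_card_fiber_eq hn hd hfib fun k => Nat.card K ^ (k - 1)
      rw [← add_sum_erase _ _ (mem_univ i₀), sum_Ico_eq_sum_range] at hsum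
      simp only [hi₀, add_tsub_cancel_left, smul_eq_mul] at hsum
      omega
    rw [hi₀, hrest] at hbound
    exact hbound.not_gt (mul_geom_sum_lt hpq _)
  · obtain ⟨i, hi⟩ := Subspace.exists_eq_top_of_iUnion_eq_univ
      (Set.eq_univ_of_forall fun x => Set.mem_iUnion.mpr (hcover x))
    have := hd i
    rw [hi, finrank_top, hE] at this
    simp at this
end

section
/- Let K be a field of characteristic not 2. Let A = [[a,0],[b,c]] be a 2×2 matrix over K such that for every t in K, the matrix [[a,t],[b,c]] has at most one nonzero eigenvalue in an algebraic closure of K. Then b = 0, and moreover a = c or a = 0 or c = 0. -/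
open Polynomial Matrix

/-!
If `b ≠ 0`, the free entry `t` lets the determinant `a * c - t * b` take any value `d`, while the
trace stays `a + c`. Choosing `d ≠ 0` with `4 * d ≠ (a + c) ^ 2` (possible as `2 ≠ 0`) gives a
characteristic polynomial with two distinct nonzero roots. Hence `b = 0`, and then the matrix for
`t = 0` is triangular with eigenvalues `a` and `c`.
-/

lemma Polynomial.eq_of_isRoot_of_ncard_setOf_isRoot_diff_zero_le_one {R : Type*} [CommRing R]
    [IsDomain R] {p : R[X]} (hp : p ≠ 0) (h : ({z | p.IsRoot z} \ {0}).ncard ≤ 1) {x y : R}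
    (hx : p.IsRoot x) (hy : p.IsRoot y) (hx0 : x ≠ 0) (hy0 : y ≠ 0) : x = y :=
  (Set.ncard_le_one_iff (finite_setOfPred_isRoot hp).sdiff).1 h ⟨hx, hx0⟩ ⟨hy, hy0⟩

lemma Polynomial.X_sq_sub_C_add_mul_X_add_C_mul {R : Type*} [CommRing R] (x y : R) :
    (X ^ 2 - C (x + y) * X + C (x * y) : R[X]) = (X - C x) * (X - C y) := by
  simp only [C_add, C_mul]
  ring

lemma Matrix.isRoot_map_charpoly_fin_two {R L : Type*} [CommRing R] [Nontrivial R] [CommRing L]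
    (f : R →+* L) (M : Matrix (Fin 2) (Fin 2) R) {x y : L} (hsum : x + y = f M.trace)
    (hprod : x * y = f M.det) :
    (M.charpoly.map f).IsRoot x ∧ (M.charpoly.map f).IsRoot y := by
  have hfactor : M.charpoly.map f = (X - C x) * (X - C y) := by
    rw [charpoly_fin_two, ← X_sq_sub_C_add_mul_X_add_C_mul, hsum, hprod]
    simp
  simp [hfactor]

lemma IsAlgClosed.exists_add_eq_and_mul_eq {k : Type*} [Field k] [IsAlgClosed k] (s p : k) :
    ∃ x y : k, x + y = s ∧ x * y = p := by
  have hdeg : (X ^ 2 - C s * X + C p).degree = 2 := by compute_degree!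
  obtain ⟨x, hx⟩ := IsAlgClosed.exists_root _ (hdeg ▸ two_ne_zero)
  refine ⟨x, s - x, by ring, ?_⟩
  simp only [IsRoot, eval_add, eval_sub, eval_mul, eval_pow, eval_C, eval_X] at hx
  linear_combination -hx

lemma exists_ne_zero_and_four_mul_ne {K : Type*} [Field K] (h2 : (2 : K) ≠ 0) (e : K) :
    ∃ d : K, d ≠ 0 ∧ 4 * d ≠ e := by
  by_cases he : 4 * 1 = e
  · refine ⟨-1, by simp, fun h => h2 ?_⟩
    have h8 : (2 : K) ^ 3 = 0 := by linear_combination he - h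
    exact pow_eq_zero_iff (n := 3) (by norm_num) |>.1 h8
  · exact ⟨1, one_ne_zero, he⟩

/-- Let `char K ≠ 2` and `A = [[a,0],[b,c]]`. If for every `t ∈ K` the matrix
`[[a,t],[b,c]]` has at most one nonzero eigenvalue in an algebraic closure of `K`, then
`b = 0` and moreover `a = c` or `a = 0` or `c = 0`. -/
theorem stmt4 {K : Type*} [Field K] (hK : (2 : K) ≠ 0) (a b c : K)
    (h : ∀ t : K,
      ({x : AlgebraicClosure K |
          ((Matrix.charpoly (!![a, t; b, c])).map
            (algebraMap K (AlgebraicClosure K))).IsRoot x} \ {0}).ncard ≤ 1) :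
    b = 0 ∧ (a = c ∨ a = 0 ∨ c = 0) := by
  set f := algebraMap K (AlgebraicClosure K)
  have hsame : ∀ t x y, x + y = f (a + c) → x * y = f (a * c - t * b) → x ≠ 0 → y ≠ 0 →
      x = y := by
    intro t x y hsum hprod hx0 hy0
    obtain ⟨hx, hy⟩ := isRoot_map_charpoly_fin_two f !![a, t; b, c] (x := x) (y := y)
      (by simpa [trace_fin_two] using hsum) (by simpa [det_fin_two, mul_comm t] using hprod)
    exact eq_of_isRoot_of_ncard_setOf_isRoot_diff_zero_le_one
      ((charpoly_monic _).map f).ne_zero (h t) hx hy hx0 hy0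
  have hb : b = 0 := by
    by_contra hb
    obtain ⟨d, hd0, hd⟩ := exists_ne_zero_and_four_mul_ne hK ((a + c) ^ 2)
    obtain ⟨x, y, hsum, hprod⟩ := IsAlgClosed.exists_add_eq_and_mul_eq (f (a + c)) (f d)
    have hdet : a * c - (a * c - d) / b * b = d := by field_simp; ring
    have hfd : x * y ≠ 0 := hprod ▸ (map_ne_zero f).2 hd0
    have hxy := hsame _ x y hsum (hdet ▸ hprod) (left_ne_zero_of_mul hfd)
      (right_ne_zero_of_mul hfd)
    refine hd (f.injective ?_)
    rw [map_mul, map_pow, ← hsum, ← hprod, hxy]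
    simp only [map_ofNat]
    ring
  refine ⟨hb, ?_⟩
  by_cases ha : a = 0
  · exact Or.inr (Or.inl ha)
  by_cases hc : c = 0
  · exact Or.inr (Or.inr hc)
  exact Or.inl <| f.injective <| hsame 0 (f a) (f c) (map_add f a c).symm (by simp [hb])
    ((map_ne_zero f).2 ha) ((map_ne_zero f).2 hc)
end

section
/- Let K be a field, p a positive integer, and φ: M_{1,p}(K) → M_{1,p}(K), ψ: M_{p,1}(K) → M_{p,1}(K) linear maps such that for every row vector L and column vector C with LC = 0, one has Lψ(C) = 0 and φ(L)C = 0. Then both φ and ψ are scalar multiples of the identity. -/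
/-!
A linear map `f` of a vector space that preserves the kernel of every linear functional is a
homothety: if `f v` were not a multiple of `v`, some functional would vanish at `v` but not at
`f v`. Every functional on row or column vectors is pairing with a column or row vector, since a
functional `ℓ` on `m × n` matrices is `M ↦ trace (A * M)` with `A j i = ℓ (single i j 1)`;
and a `1 × 1` matrix vanishes exactly when its trace does.
-/

open Module Matrix

theorem LinearMap.exists_eq_smul_id_of_forall_dual_apply_eq_zero {K V : Type*} [Field K]
    [AddCommGroup V] [Module K V] {f : V →ₗ[K] V}
    (h : ∀ (ℓ : Dual K V) (v : V), ℓ v = 0 → ℓ (f v) = 0) : ∃ a : K, f = a • 1 := by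
  refine exists_eq_smul_id_of_forall_notLinearIndependent fun v hli => ?_
  have hfv : f v ∉ K ∙ v := fun hmem => by
    obtain ⟨a, ha⟩ := Submodule.mem_span_singleton.mp hmem
    have := LinearIndependent.pair_iff.mp hli a (-1) (by simp [ha])
    simp at this
  obtain ⟨ℓ, hℓfv, hℓv⟩ := Submodule.exists_dual_map_eq_bot_of_notMem hfv inferInstance
  exact hℓfv <| h ℓ v <| by simpa [Submodule.map_span] using hℓv

namespace Matrix

theorem exists_forall_dual_apply_eq_trace_mul {K m n : Type*} [CommSemiring K] [Fintype m]
    [Fintype n] [DecidableEq m] [DecidableEq n] (ℓ : Dual K (Matrix m n K)) :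
    ∃ A : Matrix n m K, ∀ M, ℓ M = trace (A * M) := by
  refine ⟨of fun j i => ℓ (single i j 1), fun M => ?_⟩
  have hsingle (i : m) (j : n) : ℓ (single i j (M i j)) = M i j * ℓ (single i j 1) := by
    rw [← smul_eq_mul, ← map_smul, smul_single, smul_eq_mul, mul_one]
  conv_lhs => rw [matrix_eq_sum_single M]
  simp only [map_sum, hsingle, trace, diag, mul_apply, of_apply]
  rw [Finset.sum_comm]
  simp only [mul_comm]

section
variable {K n o : Type*} [Field K] [Fintype n] [DecidableEq n] [Unique o]

theorem eq_zero_iff_trace_eq_zero {R : Type*} [AddCommMonoid R] (A : Matrix o o R) :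
    A = 0 ↔ trace A = 0 := by
  simp [trace, ← Matrix.ext_iff, Unique.forall_iff]

theorem exists_eq_smul_id_of_mul_map_eq_zero (ψ : Matrix n o K →ₗ[K] Matrix n o K)
    (h : ∀ (L : Matrix o n K) (C : Matrix n o K), L * C = 0 → L * ψ C = 0) :
    ∃ β : K, ψ = β • 1 := by
  refine LinearMap.exists_eq_smul_id_of_forall_dual_apply_eq_zero fun ℓ C hC => ?_
  obtain ⟨A, hA⟩ := exists_forall_dual_apply_eq_trace_mul ℓ
  rw [hA, ← eq_zero_iff_trace_eq_zero] at hC ⊢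
  exact h A C hC

theorem exists_eq_smul_id_of_map_mul_eq_zero (φ : Matrix o n K →ₗ[K] Matrix o n K)
    (h : ∀ (L : Matrix o n K) (C : Matrix n o K), L * C = 0 → φ L * C = 0) :
    ∃ α : K, φ = α • 1 := by
  refine LinearMap.exists_eq_smul_id_of_forall_dual_apply_eq_zero fun ℓ L hL => ?_
  obtain ⟨A, hA⟩ := exists_forall_dual_apply_eq_trace_mul ℓ
  rw [hA, trace_mul_comm, ← eq_zero_iff_trace_eq_zero] at hL ⊢
  exact h L A hL

end

end Matrix

theorem stmt5_general {K : Type*} [Field K] (p : ℕ)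
    (φ : Matrix (Fin 1) (Fin p) K →ₗ[K] Matrix (Fin 1) (Fin p) K)
    (ψ : Matrix (Fin p) (Fin 1) K →ₗ[K] Matrix (Fin p) (Fin 1) K)
    (h : ∀ (L : Matrix (Fin 1) (Fin p) K) (C : Matrix (Fin p) (Fin 1) K),
      L * C = 0 → L * ψ C = 0 ∧ φ L * C = 0) :
    (∃ α : K, ∀ L : Matrix (Fin 1) (Fin p) K, φ L = α • L) ∧
    (∃ β : K, ∀ C : Matrix (Fin p) (Fin 1) K, ψ C = β • C) := by
  obtain ⟨α, hα⟩ := exists_eq_smul_id_of_map_mul_eq_zero φ fun L C hLC => (h L C hLC).2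
  obtain ⟨β, hβ⟩ := exists_eq_smul_id_of_mul_map_eq_zero ψ fun L C hLC => (h L C hLC).1
  exact ⟨⟨α, fun L => by simp [hα]⟩, ⟨β, fun C => by simp [hβ]⟩⟩

/-- If `φ, ψ` are linear endomorphisms of row and column vectors such that
`LC = 0` implies `Lψ(C) = 0` and `φ(L)C = 0`, then `φ` and `ψ` are scalar multiples of the
identity. -/
theorem stmt5 {K : Type*} [Field K] (p : ℕ) (hp : 0 < p)
    (φ : Matrix (Fin 1) (Fin p) K →ₗ[K] Matrix (Fin 1) (Fin p) K)
    (ψ : Matrix (Fin p) (Fin 1) K →ₗ[K] Matrix (Fin p) (Fin 1) K)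
    (h : ∀ (L : Matrix (Fin 1) (Fin p) K) (C : Matrix (Fin p) (Fin 1) K),
      L * C = 0 → L * ψ C = 0 ∧ φ L * C = 0) :
    (∃ α : K, ∀ L : Matrix (Fin 1) (Fin p) K, φ L = α • L) ∧
    (∃ β : K, ∀ C : Matrix (Fin p) (Fin 1) K, ψ C = β • C) :=
  stmt5_general p φ ψ h
end

section
/- Let K be a field with more than 2 elements, p ≥ 1 an integer, and f: M_{1,p}(K) → K, g: M_{p,1}(K) → K linear forms such that f(L) + g(C) = 0 for every pair (L,C) with LC ≠ 0. Then f = 0 and g = 0. -/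
open Cardinal

theorem exists_ne_zero_ne_one_of_two_lt_mk {K : Type*} [Zero K] [One K] (hK : 2 < #K) :
    ∃ a : K, a ≠ 0 ∧ a ≠ 1 := by
  by_contra! h
  have hsub : (Set.univ : Set K) ⊆ {0, 1} := fun a _ ↦ or_iff_not_imp_left.2 (h a)
  refine hK.not_ge ?_
  calc #K = #(Set.univ : Set K) := mk_univ.symm
    _ ≤ #({0, 1} : Set K) := mk_le_mk_of_subset hsub
    _ ≤ #({1} : Set K) + 1 := mk_insert_le
    _ = 2 := by rw [mk_singleton, one_add_one_eq_two]

section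
open Matrix
variable {l m n R : Type*} [Fintype m] [DecidableEq m] [CommSemiring R]

theorem mulLinearMap_separatingLeft [DecidableEq n] [Nonempty n] :
    (mulLinearMap R : Matrix l m R →ₗ[R] Matrix m n R →ₗ[R] Matrix l n R).SeparatingLeft := by
  intro A hA
  obtain ⟨k⟩ := ‹Nonempty n›
  ext i j
  simpa using congr_fun₂ (hA (single j k 1)) i k

theorem mulLinearMap_separatingRight [DecidableEq l] [Nonempty l] :
    (mulLinearMap R : Matrix l m R →ₗ[R] Matrix m n R →ₗ[R] Matrix l n R).SeparatingRight := by
  intro B hB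
  obtain ⟨k⟩ := ‹Nonempty l›
  ext i j
  simpa using congr_fun₂ (hB (single k i 1)) k j

end

namespace LinearMap
variable {K M N P : Type*} [Field K] [AddCommGroup M] [Module K M] [AddCommGroup N] [Module K N]
  [AddCommGroup P] [Module K P]

/-- Scaling `x` by `a` keeps `B x y ≠ 0`, so `f (a • x) = f x`, and `a ≠ 1` forces `f x = 0`. -/
theorem eq_zero_of_add_eq_zero_of_apply_ne_zero {B : M →ₗ[K] N →ₗ[K] P} (hB : B.SeparatingLeft)
    {a : K} (ha₀ : a ≠ 0) (ha₁ : a ≠ 1) {f : M →ₗ[K] K} {g : N →ₗ[K] K}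
    (h : ∀ x y, B x y ≠ 0 → f x + g y = 0) : f = 0 := by
  ext x
  by_cases hx : ∀ y, B x y = 0
  · simp [hB x hx]
  obtain ⟨y, hy⟩ := not_forall.1 hx
  have hax : B (a • x) y ≠ 0 := by simpa [ha₀] using hy
  have hscaled : a * f x + g y = 0 := by simpa using h _ _ hax
  have : (a - 1) * f x = 0 := by linear_combination hscaled - h x y hy
  simpa [sub_ne_zero.2 ha₁] using this

end LinearMap

theorem stmt6_general {K : Type*} [Field K] (hK : (2 : Cardinal) < Cardinal.mk K) (p : ℕ)
    (f : Matrix (Fin 1) (Fin p) K →ₗ[K] K) (g : Matrix (Fin p) (Fin 1) K →ₗ[K] K)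
    (h : ∀ (L : Matrix (Fin 1) (Fin p) K) (C : Matrix (Fin p) (Fin 1) K),
      L * C ≠ 0 → f L + g C = 0) :
    f = 0 ∧ g = 0 := by
  obtain ⟨a, ha₀, ha₁⟩ := exists_ne_zero_ne_one_of_two_lt_mk hK
  let B : Matrix (Fin 1) (Fin p) K →ₗ[K] Matrix (Fin p) (Fin 1) K →ₗ[K] Matrix (Fin 1) (Fin 1) K :=
    mulLinearMap K
  exact ⟨B.eq_zero_of_add_eq_zero_of_apply_ne_zero mulLinearMap_separatingLeft ha₀ ha₁ h,
    B.flip.eq_zero_of_add_eq_zero_of_apply_ne_zero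
      (LinearMap.flip_separatingLeft.2 mulLinearMap_separatingRight) ha₀ ha₁
      fun C L hLC ↦ (add_comm _ _).trans (h L C hLC)⟩

/-- If `|K| > 2`, `p ≥ 1`, and `f, g` are linear forms on row and column vectors
with `f(L) + g(C) = 0` whenever `LC ≠ 0`, then `f = 0` and `g = 0`. -/
theorem stmt6 {K : Type*} [Field K] (hK : (2 : Cardinal) < Cardinal.mk K) (p : ℕ) (hp : 1 ≤ p)
    (f : Matrix (Fin 1) (Fin p) K →ₗ[K] K) (g : Matrix (Fin p) (Fin 1) K →ₗ[K] K)
    (h : ∀ (L : Matrix (Fin 1) (Fin p) K) (C : Matrix (Fin p) (Fin 1) K),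
      L * C ≠ 0 → f L + g C = 0) :
    f = 0 ∧ g = 0 :=
  stmt6_general hK p f g h
end

section
/- Let K be a field of characteristic not 2 and let V be a 2-dimensional linear subspace of M_2(K) in which every matrix has at most one nonzero eigenvalue in an algebraic closure of K. Then V is similar (conjugate by a matrix of GL_2(K)) to one of the three spaces span(E_{1,2}, I_2), span(E_{1,2}, E_{1,1}), or span(E_{1,2}, E_{2,2}). -/
open Matrix Polynomial

section aux
variable {K : Type*} [Field K]

private lemma charpoly_fin2' (M : Matrix (Fin 2) (Fin 2) K) :
    M.charpoly = X^2 - C M.trace * X + C M.det := by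
  rw [Matrix.charpoly, Matrix.det_fin_two, Matrix.trace_fin_two, Matrix.det_fin_two,
    Matrix.charmatrix_apply_eq, Matrix.charmatrix_apply_eq,
    Matrix.charmatrix_apply_ne _ _ _ (by decide), Matrix.charmatrix_apply_ne _ _ _ (by decide)]
  simp only [C_add, C_sub, C_mul]
  ring

private lemma spec_iff' (M : Matrix (Fin 2) (Fin 2) K)
    (h : ({x : AlgebraicClosure K |
        ((Matrix.charpoly M).map (algebraMap K (AlgebraicClosure K))).IsRoot x} \ {0}).ncard ≤ 1) :
    M.det = 0 ∨ (M.trace)^2 = 4 * M.det := by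
  set L := AlgebraicClosure K
  set φ := algebraMap K L with hφ
  have hinj : Function.Injective φ := (algebraMap K L).injective
  set p := (Matrix.charpoly M).map φ with hp
  set T := φ M.trace with hT
  set D := φ M.det with hD
  have hpeq : p = X^2 - C T * X + C D := by
    rw [hp, charpoly_fin2']
    simp [Polynomial.map_add, Polynomial.map_sub, Polynomial.map_pow, Polynomial.map_mul]
    rfl
  have hdeg : p.degree ≠ 0 := by
    rw [hpeq]
    have : (X^2 - C T * X + C D : L[X]).degree = 2 := by compute_degree!
    simp [this]
  obtain ⟨a, ha⟩ := IsAlgClosed.exists_root p hdeg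
  have ha' : a^2 - T * a + D = 0 := by
    have h2 := ha
    rw [hpeq] at h2
    simpa [IsRoot] using h2
  set b := T - a with hb
  have hab : a * b = D := by rw [hb]; linear_combination -ha'
  have habs : a + b = T := by rw [hb]; simp
  have hroots : {x : L | p.IsRoot x} = {a, b} := by
    ext x
    simp only [Set.mem_setOf_eq, Set.mem_insert_iff, Set.mem_singleton_iff, hpeq, IsRoot]
    constructor
    · intro hx
      have hfac : (x - a) * (x - b) = 0 := by
        simp only [eval_add, eval_sub, eval_mul, eval_pow, eval_X, eval_C] at hx
        rw [hb]; linear_combination hx - ha'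
      rcases mul_eq_zero.mp hfac with h | h
      · left; linear_combination h
      · right; linear_combination h
    · rintro (rfl | rfl)
      · simpa [IsRoot, hpeq] using ha
      · simp only [eval_add, eval_sub, eval_mul, eval_pow, eval_X, eval_C, hb]
        linear_combination ha'
  rw [hroots] at h
  by_cases ha0 : a = 0
  · left; apply hinj; rw [← hD, ← hab, ha0]; simp
  by_cases hb0 : b = 0
  · left; apply hinj; rw [← hD, ← hab, hb0]; simp
  · have hne : a = b := by
      by_contra hne
      have hds : ({a, b} : Set L) \ {0} = {a, b} := by
        ext x
        simp only [Set.mem_diff, Set.mem_insert_iff, Set.mem_singleton_iff]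
        constructor
        · exact fun hx => hx.1
        · rintro (rfl | rfl)
          · exact ⟨Or.inl rfl, ha0⟩
          · exact ⟨Or.inr rfl, hb0⟩
      rw [hds, Set.ncard_pair hne] at h
      omega
    right
    apply hinj
    rw [map_pow, map_mul φ, map_ofNat, ← hT, ← hD, ← hab, ← habs, hne]
    ring

private lemma E12_eq' :
    (Matrix.single (0 : Fin 2) (1 : Fin 2) (1 : K)) = !![0,1;0,0] := by
  ext i j
  fin_cases i <;> fin_cases j <;> simp [Matrix.single]

private lemma conj_nilp' (N : Matrix (Fin 2) (Fin 2) K) (hN : N ≠ 0)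
    (htr : N.trace = 0) (hdet : N.det = 0) :
    ∃ Q : Matrix (Fin 2) (Fin 2) K, IsUnit Q.det ∧
      Q⁻¹ * N * Q = Matrix.single (0 : Fin 2) (1 : Fin 2) (1 : K) := by
  rw [Matrix.trace_fin_two] at htr
  rw [Matrix.det_fin_two] at hdet
  have key : ∀ Q : Matrix (Fin 2) (Fin 2) K, IsUnit Q.det →
      N * Q = Q * !![0,1;0,0] →
      Q⁻¹ * N * Q = Matrix.single (0:Fin 2) (1:Fin 2) (1:K) := by
    intro Q hQ hNQ
    rw [E12_eq', Matrix.mul_assoc, hNQ, ← Matrix.mul_assoc, Matrix.nonsing_inv_mul _ hQ,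
      Matrix.one_mul]
  by_cases hc : N 1 0 = 0
  · have ha : N 0 0 = 0 := by
      have h2 : N 0 0 * N 0 0 = 0 := by
        linear_combination N 0 0 * htr - hdet - N 0 1 * hc
      exact mul_self_eq_zero.mp h2
    have hd : N 1 1 = 0 := by linear_combination htr - ha
    have hb : N 0 1 ≠ 0 := by
      intro hb
      apply hN
      ext i j
      fin_cases i <;> fin_cases j <;> simp [ha, hb, hc, hd]
    refine ⟨!![N 0 1, 0; 0, 1], ?_, key _ ?_ ?_⟩
    · rw [Matrix.det_fin_two_of]; simpa using hb
    · rw [Matrix.det_fin_two_of]; simpa using hb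
    · ext i j
      fin_cases i <;> fin_cases j <;>
        simp [Matrix.mul_apply, Fin.sum_univ_two, ha, hc, hd]
  · refine ⟨!![N 0 0, 1; N 1 0, 0], ?_, key _ ?_ ?_⟩
    · rw [Matrix.det_fin_two_of]; simpa using hc
    · rw [Matrix.det_fin_two_of]; simpa using hc
    · ext i j
      fin_cases i <;> fin_cases j <;> simp [Matrix.mul_apply, Fin.sum_univ_two]
      · linear_combination N 0 0 * htr - hdet
      · linear_combination N 1 0 * htr

end aux




/-- Every 2-dimensional subspace of `M_2(K)` (`char K ≠ 2`) in which every
matrix has at most one nonzero eigenvalue in an algebraic closure is conjugate to one of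
`span(E_{1,2}, I_2)`, `span(E_{1,2}, E_{1,1})`, `span(E_{1,2}, E_{2,2})`. -/
theorem stmt8 {K : Type*} [Field K] (hK : (2 : K) ≠ 0)
    (V : Submodule K (Matrix (Fin 2) (Fin 2) K)) (hdim : Module.finrank K V = 2)
    (hspec : ∀ M ∈ V, ({x : AlgebraicClosure K |
        ((Matrix.charpoly M).map (algebraMap K (AlgebraicClosure K))).IsRoot x} \ {0}).ncard ≤ 1) :
    ∃ P : Matrix (Fin 2) (Fin 2) K, IsUnit P ∧
      ((V : Set (Matrix (Fin 2) (Fin 2) K)) =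
          (fun M => P * M * P⁻¹) ''
            (Submodule.span K {Matrix.single (0 : Fin 2) (1 : Fin 2) (1 : K),
              (1 : Matrix (Fin 2) (Fin 2) K)} : Set (Matrix (Fin 2) (Fin 2) K)) ∨
        (V : Set (Matrix (Fin 2) (Fin 2) K)) =
          (fun M => P * M * P⁻¹) ''
            (Submodule.span K {Matrix.single (0 : Fin 2) (1 : Fin 2) (1 : K),
              Matrix.single (0 : Fin 2) (0 : Fin 2) (1 : K)} :
                Set (Matrix (Fin 2) (Fin 2) K)) ∨
        (V : Set (Matrix (Fin 2) (Fin 2) K)) =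
          (fun M => P * M * P⁻¹) ''
            (Submodule.span K {Matrix.single (0 : Fin 2) (1 : Fin 2) (1 : K),
              Matrix.single (1 : Fin 2) (1 : Fin 2) (1 : K)} :
                Set (Matrix (Fin 2) (Fin 2) K))) := by
  classical
  have h4 : (4 : K) ≠ 0 := by
    have h22 : (2:K) * 2 = 4 := by norm_num
    intro h
    rcases mul_eq_zero.mp (h22.trans h) with h' | h' <;> exact hK h'
  have hPspec : ∀ M ∈ V, M.det = 0 ∨ M.trace ^ 2 = 4 * M.det :=
    fun M hM => spec_iff' M (hspec M hM)
  -- a nonzero trace-zero element of V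
  obtain ⟨N, hNV, hN0, hNtr⟩ : ∃ N, N ∈ V ∧ N ≠ 0 ∧ N.trace = 0 := by
    let f : V →ₗ[K] K := (Matrix.traceLinearMap (Fin 2) K K).comp V.subtype
    have hrn := LinearMap.finrank_range_add_finrank_ker f
    have hr : Module.finrank K (LinearMap.range f) ≤ 1 := by
      have := Submodule.finrank_le (LinearMap.range f)
      simpa using this
    have hker : LinearMap.ker f ≠ ⊥ := by
      intro hbot
      rw [hbot, finrank_bot, hdim] at hrn
      omega
    obtain ⟨x, hx, hx0⟩ := Submodule.exists_mem_ne_zero_of_ne_bot hker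
    refine ⟨(x : Matrix (Fin 2) (Fin 2) K), x.2, ?_, ?_⟩
    · simpa [Submodule.coe_eq_zero] using hx0
    · simpa [f, Matrix.traceLinearMap] using (LinearMap.mem_ker.mp hx)
  have hNdet : N.det = 0 := by
    rcases hPspec N hNV with h | h
    · exact h
    · rw [hNtr] at h
      have h40 : (4:K) * N.det = 0 := by linear_combination -h
      rcases mul_eq_zero.mp h40 with h' | h'
      · exact absurd h' h4
      · exact h'
  obtain ⟨Q, hQ, hQN⟩ := conj_nilp' N hN0 hNtr hNdet
  have hQdet : Q.det ≠ 0 := hQ.ne_zero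
  have hQQ : Q * Q⁻¹ = 1 := Matrix.mul_nonsing_inv Q hQ
  have hQQ' : Q⁻¹ * Q = 1 := Matrix.nonsing_inv_mul Q hQ
  have l1 : ∀ M : Matrix (Fin 2) (Fin 2) K, Q * (Q⁻¹ * M * Q) * Q⁻¹ = M := by
    intro M
    rw [Matrix.mul_assoc Q⁻¹ M Q, ← Matrix.mul_assoc Q Q⁻¹ (M * Q), hQQ, Matrix.one_mul,
      Matrix.mul_assoc M Q Q⁻¹, hQQ, Matrix.mul_one]
  have l2 : ∀ M : Matrix (Fin 2) (Fin 2) K, Q⁻¹ * (Q * M * Q⁻¹) * Q = M := by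
    intro M
    rw [Matrix.mul_assoc Q M Q⁻¹, ← Matrix.mul_assoc Q⁻¹ Q (M * Q⁻¹), hQQ', Matrix.one_mul,
      Matrix.mul_assoc M Q⁻¹ Q, hQQ', Matrix.mul_one]
  let e : Matrix (Fin 2) (Fin 2) K ≃ₗ[K] Matrix (Fin 2) (Fin 2) K :=
  { toFun := fun M => Q⁻¹ * M * Q
    map_add' := fun x y => by
      show Q⁻¹ * (x + y) * Q = Q⁻¹ * x * Q + Q⁻¹ * y * Q
      rw [Matrix.mul_add, Matrix.add_mul]
    map_smul' := fun c x => by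
      show Q⁻¹ * (c • x) * Q = c • (Q⁻¹ * x * Q)
      rw [Matrix.mul_smul, Matrix.smul_mul]
    invFun := fun M => Q * M * Q⁻¹
    left_inv := l1
    right_inv := l2 }
  set V' := V.map e.toLinearMap with hV'
  have hdim' : Module.finrank K V' = 2 := by
    rw [hV', LinearEquiv.finrank_map_eq e V, hdim]
  set E : Matrix (Fin 2) (Fin 2) K := Matrix.single (0 : Fin 2) (1 : Fin 2) (1 : K)
    with hE
  have hE12V' : E ∈ V' := ⟨N, hNV, hQN⟩
  have hspec' : ∀ M ∈ V', M.det = 0 ∨ M.trace ^ 2 = 4 * M.det := by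
    rintro M ⟨M₀, hM₀, rfl⟩
    have hdet : (e.toLinearMap M₀).det = M₀.det := by
      show (Q⁻¹ * M₀ * Q).det = _
      rw [Matrix.det_mul, Matrix.det_mul, Matrix.det_nonsing_inv, Ring.inverse_eq_inv]
      field_simp
    have htr : (e.toLinearMap M₀).trace = M₀.trace := by
      show (Q⁻¹ * M₀ * Q).trace = _
      rw [Matrix.trace_mul_comm (Q⁻¹ * M₀) Q, ← Matrix.mul_assoc, hQQ, Matrix.one_mul]
    rw [hdet, htr]
    exact hPspec M₀ hM₀
  -- every element of V' is upper triangular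
  have hupper : ∀ M ∈ V', M 1 0 = 0 := by
    intro M hM
    by_contra hc
    set s := (M 0 0 + M 1 1) ^ 2 with hs
    have keyv : ∀ v : K, v = 0 ∨ s = 4 * v := by
      intro v
      set t := (M 0 0 * M 1 1 - M 0 1 * M 1 0 - v) / M 1 0 with ht
      have hmem : M + t • E ∈ V' := add_mem hM (Submodule.smul_mem _ _ hE12V')
      have hEE : E = !![0,1;0,0] := E12_eq'
      have hdet2 : (M + t • E).det = v := by
        rw [Matrix.det_fin_two]
        simp only [hEE, Matrix.add_apply, Matrix.smul_apply, Matrix.of_apply, Matrix.cons_val', Matrix.cons_val_zero,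
          Matrix.cons_val_one, Matrix.head_cons, Matrix.head_fin_const, Matrix.empty_val',
          Matrix.cons_val_fin_one, smul_eq_mul, mul_zero, mul_one, add_zero]
        rw [ht, add_mul, div_mul_cancel₀ _ hc]
        ring
      have htr2 : (M + t • E).trace = M 0 0 + M 1 1 := by
        rw [Matrix.trace_fin_two]
        simp [hEE, Matrix.add_apply, Matrix.smul_apply]
      rcases hspec' _ hmem with h | h
      · left; rw [hdet2] at h; exact h
      · right; rw [htr2, hdet2] at h; exact h
    have e1 := keyv ((s + 4) / 4)
    have e2 := keyv ((s + 8) / 4)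
    have h8 : (8 : K) ≠ 0 := by
      have h24 : (2:K) * 4 = 8 := by norm_num
      intro h
      rcases mul_eq_zero.mp (h24.trans h) with h' | h'
      · exact hK h'
      · exact h4 h'
    rcases e1 with e1 | e1
    · rcases e2 with e2 | e2
      · apply h4
        field_simp at e1 e2
        linear_combination e2 - e1
      · apply h8
        field_simp at e2
        linear_combination -e2
    · apply h4
      field_simp at e1
      linear_combination -e1
  have hEE : E = !![0,1;0,0] := E12_eq'
  have hE11 : (Matrix.single (0 : Fin 2) (0 : Fin 2) (1 : K)) = !![1,0;0,0] := by
    ext i j; fin_cases i <;> fin_cases j <;> simp [Matrix.single]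
  have hE22 : (Matrix.single (1 : Fin 2) (1 : Fin 2) (1 : K)) = !![0,0;0,1] := by
    ext i j; fin_cases i <;> fin_cases j <;> simp [Matrix.single]
  -- diagonal condition
  have hdiag : ∀ M ∈ V', M 0 0 * M 1 1 = 0 ∨ M 0 0 = M 1 1 := by
    intro M hM
    have h10 := hupper M hM
    rcases hspec' M hM with h | h
    · left
      rw [Matrix.det_fin_two, h10, mul_zero, sub_zero] at h
      exact h
    · right
      rw [Matrix.det_fin_two, Matrix.trace_fin_two, h10, mul_zero, sub_zero] at h
      have hsq : (M 0 0 - M 1 1) ^ 2 = 0 := by linear_combination h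
      exact sub_eq_zero.mp (sq_eq_zero_iff.mp hsq)
  have hEne : E ≠ 0 := by
    intro h
    have h2 : E 0 1 = (1 : K) := by rw [hEE]; simp
    rw [h] at h2
    simp at h2
  -- a member with a nonzero diagonal entry
  obtain ⟨A, hAV, hA0⟩ : ∃ A, A ∈ V' ∧ (A 0 0 ≠ 0 ∨ A 1 1 ≠ 0) := by
    by_contra hcon
    push_neg at hcon
    have hle : V' ≤ Submodule.span K {E} := by
      intro M hM
      obtain ⟨h0, h1⟩ := hcon M hM
      have hMeq : M = M 0 1 • E := by
        ext i j
        fin_cases i <;> fin_cases j <;>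
          simp [hEE, Matrix.smul_apply, h0, h1, hupper M hM]
      rw [hMeq]
      exact Submodule.smul_mem _ _ (Submodule.mem_span_singleton_self E)
    have hfr := Submodule.finrank_mono hle
    rw [finrank_span_singleton hEne, hdim'] at hfr
    omega
  have huA := hupper A hAV
  -- diagonals of members of V' are proportional to that of A
  have hprop : ∀ M ∈ V', A 1 1 * M 0 0 = A 0 0 * M 1 1 := by
    intro M hM
    by_contra hne
    have hδ0 : A 1 1 * M 0 0 - A 0 0 * M 1 1 ≠ 0 := sub_ne_zero.mpr hne
    have hB := hdiag _ (add_mem (Submodule.smul_mem _ (A 1 1 + A 0 0) hM)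
      (Submodule.smul_mem _ (- M 1 1 - M 0 0) hAV))
    simp only [Matrix.add_apply, Matrix.smul_apply, smul_eq_mul] at hB
    rcases hB with h | h
    · apply hδ0
      have hsq : (A 1 1 * M 0 0 - A 0 0 * M 1 1) * (A 1 1 * M 0 0 - A 0 0 * M 1 1) = 0 := by
        linear_combination -h
      exact mul_self_eq_zero.mp hsq
    · have h2 : 2 * (A 1 1 * M 0 0 - A 0 0 * M 1 1) = 0 := by linear_combination h
      rcases mul_eq_zero.mp h2 with h' | h'
      · exact hK h'
      · exact hδ0 h'
  -- V' = span {E, A}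
  have hVle : V' ≤ Submodule.span K {E, A} := by
    intro M hM
    have hp := hprop M hM
    have hu := hupper M hM
    have hmemE : E ∈ Submodule.span K {E, A} := Submodule.subset_span (by simp)
    have hmemA : A ∈ Submodule.span K {E, A} := Submodule.subset_span (by simp)
    rcases hA0 with ha | ha
    · have hMeq : M = (M 0 1 - M 0 0 / A 0 0 * A 0 1) • E + (M 0 0 / A 0 0) • A := by
        ext i j
        fin_cases i <;> fin_cases j <;>
          simp [hEE, Matrix.add_apply, Matrix.smul_apply, hu, huA]
        · field_simp
        · field_simp
          linear_combination -hp
      rw [hMeq]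
      exact add_mem (Submodule.smul_mem _ _ hmemE) (Submodule.smul_mem _ _ hmemA)
    · have hMeq : M = (M 0 1 - M 1 1 / A 1 1 * A 0 1) • E + (M 1 1 / A 1 1) • A := by
        ext i j
        fin_cases i <;> fin_cases j <;>
          simp [hEE, Matrix.add_apply, Matrix.smul_apply, hu, huA]
        · field_simp
          linear_combination hp
        · field_simp
      rw [hMeq]
      exact add_mem (Submodule.smul_mem _ _ hmemE) (Submodule.smul_mem _ _ hmemA)
  have hVge : Submodule.span K {E, A} ≤ V' := by
    rw [Submodule.span_le, Set.insert_subset_iff, Set.singleton_subset_iff]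
    exact ⟨hE12V', hAV⟩
  have hV'eq : V' = Submodule.span K {E, A} := le_antisymm hVle hVge
  -- conversion to statement about V
  have hfin : ∀ S : Set (Matrix (Fin 2) (Fin 2) K), V' = Submodule.span K S →
      (V : Set (Matrix (Fin 2) (Fin 2) K)) =
        (fun M => Q * M * Q⁻¹) '' (Submodule.span K S : Set (Matrix (Fin 2) (Fin 2) K)) := by
    intro S hS
    rw [← hS, hV', Submodule.map_coe]
    ext x
    constructor
    · intro hx
      exact ⟨e.toLinearMap x, Set.mem_image_of_mem _ hx, l1 x⟩
    · rintro ⟨y, ⟨z, hz, rfl⟩, rfl⟩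
      show Q * (Q⁻¹ * z * Q) * Q⁻¹ ∈ V
      rw [l1 z]
      exact hz
  refine ⟨Q, (Matrix.isUnit_iff_isUnit_det Q).mpr hQ, ?_⟩
  rcases hdiag A hAV with had | haeq
  · rcases mul_eq_zero.mp had with h0 | h1
    · -- A 0 0 = 0, A 1 1 ≠ 0 : E22 case
      have ha1 : A 1 1 ≠ 0 := hA0.resolve_left (fun h => h h0)
      right; right
      apply hfin
      rw [hV'eq]
      apply le_antisymm <;>
        rw [Submodule.span_le, Set.insert_subset_iff, Set.singleton_subset_iff]
      · refine ⟨Submodule.subset_span (by simp), ?_⟩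
        have hAeq : A = A 0 1 • E + A 1 1 • Matrix.single (1 : Fin 2) (1 : Fin 2) (1:K) := by
          ext i j
          fin_cases i <;> fin_cases j <;>
            simp [hEE, hE22, Matrix.add_apply, Matrix.smul_apply, h0, huA]
        rw [hAeq]
        exact add_mem (Submodule.smul_mem _ _ (Submodule.subset_span (by simp)))
          (Submodule.smul_mem _ _ (Submodule.subset_span (by simp)))
      · refine ⟨Submodule.subset_span (by simp), ?_⟩
        have h22 : Matrix.single (1 : Fin 2) (1 : Fin 2) (1:K) =
            (A 1 1)⁻¹ • A - ((A 1 1)⁻¹ * A 0 1) • E := by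
          ext i j
          fin_cases i <;> fin_cases j <;>
            simp [hEE, hE22, Matrix.sub_apply, Matrix.smul_apply, h0, huA] <;> field_simp
        rw [h22]
        exact sub_mem (Submodule.smul_mem _ _ (Submodule.subset_span (by simp)))
          (Submodule.smul_mem _ _ (Submodule.subset_span (by simp)))
    · -- A 1 1 = 0, A 0 0 ≠ 0 : E11 case
      have ha0 : A 0 0 ≠ 0 := hA0.resolve_right (fun h => h h1)
      right; left
      apply hfin
      rw [hV'eq]
      apply le_antisymm <;>
        rw [Submodule.span_le, Set.insert_subset_iff, Set.singleton_subset_iff]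
      · refine ⟨Submodule.subset_span (by simp), ?_⟩
        have hAeq : A = A 0 1 • E + A 0 0 • Matrix.single (0 : Fin 2) (0 : Fin 2) (1:K) := by
          ext i j
          fin_cases i <;> fin_cases j <;>
            simp [hEE, hE11, Matrix.add_apply, Matrix.smul_apply, h1, huA]
        rw [hAeq]
        exact add_mem (Submodule.smul_mem _ _ (Submodule.subset_span (by simp)))
          (Submodule.smul_mem _ _ (Submodule.subset_span (by simp)))
      · refine ⟨Submodule.subset_span (by simp), ?_⟩
        have h11 : Matrix.single (0 : Fin 2) (0 : Fin 2) (1:K) =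
            (A 0 0)⁻¹ • A - ((A 0 0)⁻¹ * A 0 1) • E := by
          ext i j
          fin_cases i <;> fin_cases j <;>
            simp [hEE, hE11, Matrix.sub_apply, Matrix.smul_apply, h1, huA] <;> field_simp
        rw [h11]
        exact sub_mem (Submodule.smul_mem _ _ (Submodule.subset_span (by simp)))
          (Submodule.smul_mem _ _ (Submodule.subset_span (by simp)))
  · -- A 0 0 = A 1 1 ≠ 0 : identity case
    have ha0 : A 0 0 ≠ 0 := by
      rcases hA0 with h | h
      · exact h
      · rw [haeq]; exact h
    left
    apply hfin
    rw [hV'eq]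
    apply le_antisymm <;>
      rw [Submodule.span_le, Set.insert_subset_iff, Set.singleton_subset_iff]
    · refine ⟨Submodule.subset_span (by simp), ?_⟩
      have hAeq : A = A 0 1 • E + A 0 0 • (1 : Matrix (Fin 2) (Fin 2) K) := by
        ext i j
        fin_cases i <;> fin_cases j <;>
          simp [hEE, Matrix.add_apply, Matrix.smul_apply, Matrix.one_apply, huA, haeq]
      rw [hAeq]
      exact add_mem (Submodule.smul_mem _ _ (Submodule.subset_span (by simp)))
        (Submodule.smul_mem _ _ (Submodule.subset_span (by simp)))
    · refine ⟨Submodule.subset_span (by simp), ?_⟩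
      have hone : (1 : Matrix (Fin 2) (Fin 2) K) =
          (A 0 0)⁻¹ • A - ((A 0 0)⁻¹ * A 0 1) • E := by
        ext i j
        fin_cases i <;> fin_cases j <;>
          simp [hEE, Matrix.sub_apply, Matrix.smul_apply, Matrix.one_apply, huA, ← haeq] <;>
          field_simp
      rw [hone]
      exact sub_mem (Submodule.smul_mem _ _ (Submodule.subset_span (by simp)))
        (Submodule.smul_mem _ _ (Submodule.subset_span (by simp)))
end

section
/- Let P be an invertible n×n matrix over a field K such that P · NT_n(K) · P^{-1} ⊆ NT_n(K), where NT_n(K) is the space of strictly upper triangular matrices. Then P is upper triangular. -/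
/-!
Conjugating the matrix unit `E_ab` (`a < b`) by `P` gives the matrix with entries
`P i a * P⁻¹ b j`, so the hypothesis says `P i a * P⁻¹ b j = 0` whenever `j ≤ i`. Let `m a` be the
lowest row in which column `a` of `P` is nonzero. Since `(P⁻¹ * P) b b = 1`, some `k` has
`P⁻¹ b k ≠ 0 ≠ P k b`; for `a < b` this forces `m a < k ≤ m b`. Thus `m` is a strictly monotone
self-map of `Fin n`, hence `m a ≤ a`, which is upper triangularity.
-/

namespace Matrix

variable {ι R : Type*} [Fintype ι] [DecidableEq ι]

theorem mul_single_mul_apply [Semiring R] (A B : Matrix ι ι R) (a b i j : ι) (c : R) :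
    (A * single a b c * B) i j = A i a * c * B b j := by
  simp [mul_apply, single, ite_and]

theorem exists_ne_zero_and_ne_zero_of_mul_eq_one [Semiring R] [Nontrivial R]
    {A B : Matrix ι ι R} (hBA : B * A = 1) (b : ι) : ∃ k, B b k ≠ 0 ∧ A k b ≠ 0 := by
  have : ∑ k, B b k * A k b ≠ 0 := by
    rw [← mul_apply, hBA, one_apply_eq]
    exact one_ne_zero
  obtain ⟨k, -, hk⟩ := Finset.exists_ne_zero_of_sum_ne_zero this
  exact ⟨k, left_ne_zero_of_mul hk, right_ne_zero_of_mul hk⟩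

variable [LinearOrder ι]

section StrictUpper

variable [Semiring R] {A B : Matrix ι ι R}
  (h : ∀ N : Matrix ι ι R, (∀ i j, j ≤ i → N i j = 0) → ∀ i j, j ≤ i → (A * N * B) i j = 0)
include h

theorem mul_eq_zero_of_mul_strictUpper_mul {a b i j : ι} (hab : a < b) (hji : j ≤ i) :
    A i a * B b j = 0 := by
  have hE : ∀ i j, j ≤ i → single a b (1 : R) i j = 0 := fun i j hji ↦
    single_apply_of_ne _ _ _ _ _ (by rintro ⟨rfl, rfl⟩; exact hji.not_gt hab)
  simpa [mul_single_mul_apply] using h _ hE i j hji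

theorem exists_lt_ne_zero_of_mul_strictUpper_mul [NoZeroDivisors R] [Nontrivial R]
    (hBA : B * A = 1) {a b i : ι} (hab : a < b) (hia : A i a ≠ 0) : ∃ k, i < k ∧ A k b ≠ 0 := by
  obtain ⟨k, hBk, hAk⟩ := exists_ne_zero_and_ne_zero_of_mul_eq_one hBA b
  refine ⟨k, lt_of_not_ge fun hki ↦ ?_, hAk⟩
  exact mul_ne_zero hia hBk (mul_eq_zero_of_mul_strictUpper_mul h hab hki)

theorem blockTriangular_of_mul_strictUpper_mul [NoZeroDivisors R] [Nontrivial R]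
    (hBA : B * A = 1) : A.BlockTriangular id := by
  classical
  have hcol (a : ι) : {i | A i a ≠ 0}.toFinset.Nonempty := by
    obtain ⟨k, -, hk⟩ := exists_ne_zero_and_ne_zero_of_mul_eq_one hBA a
    exact ⟨k, by simpa using hk⟩
  let lowest (a : ι) : ι := {i | A i a ≠ 0}.toFinset.max' (hcol a)
  have hlowest (a : ι) : A (lowest a) a ≠ 0 := by simpa [lowest] using Finset.max'_mem _ (hcol a)
  have le_lowest {a i : ι} (hia : A i a ≠ 0) : i ≤ lowest a :=
    Finset.le_max' _ i (by simpa using hia)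
  have hmono : StrictMono lowest := fun a b hab ↦ by
    obtain ⟨k, hk, hAk⟩ := exists_lt_ne_zero_of_mul_strictUpper_mul h hBA hab (hlowest a)
    exact hk.trans_le (le_lowest hAk)
  intro i a hai
  by_contra hia
  exact (le_lowest hia |>.trans (hmono.le_id a)).not_gt hai

end StrictUpper

end Matrix

/-- If `P` is invertible and `P · NT_n(K) · P⁻¹ ⊆ NT_n(K)` (strictly upper
triangular matrices), then `P` is upper triangular. -/
theorem stmt9 {K : Type*} [Field K] (n : ℕ) (P : Matrix (Fin n) (Fin n) K) (hP : IsUnit P)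
    (h : ∀ N : Matrix (Fin n) (Fin n) K, (∀ i j : Fin n, j ≤ i → N i j = 0) →
      ∀ i j : Fin n, j ≤ i → (P * N * P⁻¹) i j = 0) :
    ∀ i j : Fin n, j < i → P i j = 0 := by
  have hinv : P⁻¹ * P = 1 := P.nonsing_inv_mul ((P.isUnit_iff_isUnit_det).mp hP)
  exact fun i j hji ↦ Matrix.blockTriangular_of_mul_strictUpper_mul h hinv hji
end

section
/- Let K be a field with more than 2 elements and I a non-empty subset of {1,...,n}. Let V_I be the space of upper triangular n×n matrices whose diagonal entries at positions in I are all equal and whose diagonal entries at positions outside I are zero. Let φ: V_I → K be a linear form such that for every M in V_I with a nonzero eigenvalue λ in K, φ(M) ∈ {0, λ}. Then either φ = 0, or φ(M) equals the common diagonal entry of M at positions of I, for all M in V_I. -/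
/-!
Write `D = D_I` and fix `i₀ ∈ I`. Every `M ∈ V_I` splits as `M = M i₀ i₀ • D + N` with `N ∈ V_I`
having zero diagonal. For every scalar `c`, the triangular matrix `D + c • N` has eigenvalue `1`,
so `φ D + c * φ N ∈ {0, 1}`. As `K` has a third element, a non-constant affine function of `c`
cannot take only two values, so `φ N = 0`. Hence `φ M = M i₀ i₀ * φ D`, and `φ D ∈ {0, 1}`
because `D` itself has eigenvalue `1`.
-/

/-- Membership in `V_I = K·D_I ⊕ NT_n(K)`: upper triangular, diagonal entries outside `I`
are zero, diagonal entries at positions of `I` are all equal. -/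
def memVI {K : Type*} [Field K] {n : ℕ} (I : Set (Fin n))
    (M : Matrix (Fin n) (Fin n) K) : Prop :=
  (∀ i j : Fin n, j < i → M i j = 0) ∧ (∀ i : Fin n, i ∉ I → M i i = 0) ∧
    (∀ i ∈ I, ∀ j ∈ I, M i i = M j j)

open Polynomial Matrix Cardinal

lemma eq_zero_of_forall_add_mul_eq_or_eq {K : Type*} [Field K] (hK : 2 < #K) {a b u v : K}
    (h : ∀ c : K, a + c * b = u ∨ a + c * b = v) : b = 0 := by
  by_contra hb
  have h3 : ((2 : ℕ) + 1 : Cardinal) ≤ #K := natCast_add_one_le_iff.mpr (mod_cast hK)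
  obtain ⟨c, hcu, hcv⟩ :=
    exists_ne_ne_of_three_le (mod_cast h3) ((u - a) / b) ((v - a) / b)
  rcases h c with hc | hc
  · exact hcu (by field_simp; linear_combination hc)
  · exact hcv (by field_simp; linear_combination hc)

namespace memVI

variable {K : Type*} [Field K] {n : ℕ} {I : Set (Fin n)} {M : Matrix (Fin n) (Fin n) K}

lemma isUpperTriangular (hM : memVI I M) : M.IsUpperTriangular :=
  fun i j hij => hM.1 i j hij

lemma isRoot_charpoly_diag (hM : memVI I M) (i : Fin n) : M.charpoly.IsRoot (M i i) := by
  rw [charpoly_of_isUpperTriangular M hM.isUpperTriangular, IsRoot, eval_prod]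
  exact Finset.prod_eq_zero (Finset.mem_univ i) (by simp)

end memVI

section VI

variable {K : Type*} [Field K] {n : ℕ}

def subspaceVI (I : Set (Fin n)) : Submodule K (Matrix (Fin n) (Fin n) K) where
  carrier := {M | memVI I M}
  zero_mem' := ⟨fun _ _ _ => rfl, fun _ _ => rfl, fun _ _ _ _ => rfl⟩
  add_mem' {M N} hM hN :=
    ⟨fun i j hij => by simp [hM.1 i j hij, hN.1 i j hij],
      fun i hi => by simp [hM.2.1 i hi, hN.2.1 i hi],
      fun i hi j hj => by simp [hM.2.2 i hi j hj, hN.2.2 i hi j hj]⟩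
  smul_mem' c {M} hM :=
    ⟨fun i j hij => by simp [hM.1 i j hij], fun i hi => by simp [hM.2.1 i hi],
      fun i hi j hj => by simp [hM.2.2 i hi j hj]⟩

open Classical in
/-- The matrix `D_I`. -/
noncomputable def indicatorMatrix (I : Set (Fin n)) : Matrix (Fin n) (Fin n) K :=
  diagonal (I.indicator 1)

lemma indicatorMatrix_apply_self_of_mem {I : Set (Fin n)} {i : Fin n} (hi : i ∈ I) :
    indicatorMatrix (K := K) I i i = 1 := by
  simp [indicatorMatrix, hi]

lemma memVI_indicatorMatrix (I : Set (Fin n)) : memVI I (indicatorMatrix (K := K) I) :=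
  ⟨fun i j hij => diagonal_apply_ne _ (ne_of_gt hij),
    fun i hi => by simp [indicatorMatrix, hi],
    fun i hi j hj => by
      rw [indicatorMatrix_apply_self_of_mem hi, indicatorMatrix_apply_self_of_mem hj]⟩

section LinearForm

variable {I : Set (Fin n)} {i₀ : Fin n} (φ : Matrix (Fin n) (Fin n) K →ₗ[K] K)

lemma map_eq_zero_of_diag_eq_zero (hK : 2 < #K) (hi₀ : i₀ ∈ I)
    (hφ : ∀ M : Matrix (Fin n) (Fin n) K, memVI I M →
      ∀ lam : K, lam ≠ 0 → M.charpoly.IsRoot lam → φ M = 0 ∨ φ M = lam)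
    {N : Matrix (Fin n) (Fin n) K} (hN : memVI I N) (hN₀ : N i₀ i₀ = 0) : φ N = 0 := by
  refine eq_zero_of_forall_add_mul_eq_or_eq hK
    (a := φ (indicatorMatrix I)) (u := 0) (v := 1) fun c => ?_
  have hmem : indicatorMatrix I + c • N ∈ subspaceVI I :=
    add_mem (memVI_indicatorMatrix I) (Submodule.smul_mem _ c hN)
  have hdiag : (indicatorMatrix I + c • N : Matrix (Fin n) (Fin n) K) i₀ i₀ = 1 := by
    simp [indicatorMatrix_apply_self_of_mem hi₀, hN₀]
  have hroot := hmem.isRoot_charpoly_diag i₀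
  rw [hdiag] at hroot
  simpa using hφ _ hmem 1 one_ne_zero hroot

lemma map_eq_diag_mul_map_indicatorMatrix (hi₀ : i₀ ∈ I)
    (hφ₀ : ∀ N : Matrix (Fin n) (Fin n) K, memVI I N → N i₀ i₀ = 0 → φ N = 0)
    {M : Matrix (Fin n) (Fin n) K} (hM : memVI I M) :
    φ M = M i₀ i₀ * φ (indicatorMatrix I) := by
  have hmem : M - M i₀ i₀ • indicatorMatrix I ∈ subspaceVI I :=
    sub_mem hM (Submodule.smul_mem _ _ (memVI_indicatorMatrix I))
  have hdiag : (M - M i₀ i₀ • indicatorMatrix I : Matrix (Fin n) (Fin n) K) i₀ i₀ = 0 := by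
    simp [indicatorMatrix_apply_self_of_mem hi₀]
  simpa [sub_eq_zero] using hφ₀ _ hmem hdiag

end LinearForm

end VI

/-- Linear form lemma, type (I). -/
theorem stmt10 {K : Type*} [Field K] (hK : (2 : Cardinal) < Cardinal.mk K)
    (n : ℕ) (I : Set (Fin n)) (hI : I.Nonempty)
    (φ : Matrix (Fin n) (Fin n) K →ₗ[K] K)
    (hφ : ∀ M : Matrix (Fin n) (Fin n) K, memVI I M →
      ∀ lam : K, lam ≠ 0 → (Matrix.charpoly M).IsRoot lam → (φ M = 0 ∨ φ M = lam)) :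
    (∀ M : Matrix (Fin n) (Fin n) K, memVI I M → φ M = 0) ∨
      (∀ M : Matrix (Fin n) (Fin n) K, memVI I M → ∀ i ∈ I, φ M = M i i) := by
  obtain ⟨i₀, hi₀⟩ := hI
  have hφ₀ (N) (hN : memVI I N) (hN₀ : N i₀ i₀ = 0) :=
    map_eq_zero_of_diag_eq_zero φ hK hi₀ hφ hN hN₀
  have hD := (memVI_indicatorMatrix (K := K) I).isRoot_charpoly_diag i₀
  rw [indicatorMatrix_apply_self_of_mem hi₀] at hD
  rcases hφ _ (memVI_indicatorMatrix I) 1 one_ne_zero hD with hD₀ | hD₁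
  · left
    intro M hM
    rw [map_eq_diag_mul_map_indicatorMatrix φ hi₀ hφ₀ hM, hD₀, mul_zero]
  · right
    intro M hM i hi
    rw [map_eq_diag_mul_map_indicatorMatrix φ hi₀ hφ₀ hM, hD₁, mul_one, hM.2.2 i₀ hi₀ i hi]
end

section
/- Let K be a field, M a 4×4 matrix over K whose characteristic polynomial has the form t⁴ + bt² + ct + d (i.e., zero coefficient on t³), and suppose M has at most two eigenvalues in an algebraic closure of K, with char K ≠ 2, 3. Then: (a) if c = 0 then b² = 4d; (b) if b = 0 then c = 0. -/
/-!
Over the algebraic closure the characteristic polynomial splits, so having at most two distinct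
roots it equals `(X - r) ^ m * (X - s) ^ n` with `m + n = 4`. The vanishing cubic coefficient
`m r + n s = 0` leaves, up to swapping `r` and `s`, only `s = -3 r` (for `m = 3`), `s = -r`
(for `m = 2`) and `r = 0` (for `m = 4`), so the polynomial is `(X - t)³ (X + 3t)` or
`(X - t)² (X + t)²`, and both claims are immediate for these two families.
-/

open Polynomial

theorem Set.exists_forall_eq_or_eq_of_ncard_le_two {α : Type*} [Nonempty α] {S : Set α}
    (hS : S.Finite) (h : S.ncard ≤ 2) : ∃ r s, ∀ x ∈ S, x = r ∨ x = s := by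
  obtain h0 | h1 | h2 : S.ncard = 0 ∨ S.ncard = 1 ∨ S.ncard = 2 := by omega
  · rw [Set.ncard_eq_zero hS] at h0
    simp [h0]
  · obtain ⟨r, rfl⟩ := Set.ncard_eq_one.mp h1
    exact ⟨r, r, by simp⟩
  · obtain ⟨r, s, -, rfl⟩ := Set.ncard_eq_two.mp h2
    exact ⟨r, s, by simp⟩

theorem Multiset.exists_eq_replicate_add_replicate {α : Type*} {t : Multiset α} {r s : α}
    (h : ∀ x ∈ t, x = r ∨ x = s) : ∃ m n, t = replicate m r + replicate n s := by
  induction t using Multiset.induction_on with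
  | empty => exact ⟨0, 0, rfl⟩
  | cons a t ih =>
    obtain ⟨m, n, rfl⟩ := ih fun x hx => h x (mem_cons_of_mem hx)
    rcases h a (mem_cons_self a _) with rfl | rfl
    · exact ⟨m + 1, n, by rw [replicate_succ, cons_add]⟩
    · exact ⟨m, n + 1, by rw [replicate_succ, add_cons]⟩

theorem Polynomial.exists_eq_pow_mul_pow_of_ncard_le_two {R : Type*} [CommRing R] [IsDomain R]
    {p : R[X]} (hmonic : p.Monic) (hsplit : p.Splits) (h : {x | p.IsRoot x}.ncard ≤ 2) :
    ∃ r s m n, m + n = p.natDegree ∧ p = (X - C r) ^ m * (X - C s) ^ n := by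
  obtain ⟨r, s, hrs⟩ :=
    Set.exists_forall_eq_or_eq_of_ncard_le_two (finite_setOfPred_isRoot hmonic.ne_zero) h
  obtain ⟨m, n, hroots⟩ :=
    Multiset.exists_eq_replicate_add_replicate fun x hx => hrs x (isRoot_of_mem_roots hx)
  refine ⟨r, s, m, n, ?_, ?_⟩
  · rw [hsplit.natDegree_eq_card_roots, hroots, Multiset.card_add, Multiset.card_replicate,
      Multiset.card_replicate]
  · conv_lhs => rw [hsplit.eq_prod_roots_of_monic hmonic, hroots]
    simp

theorem coeffs_eq_of_quartic_eq {R : Type*} [CommRing R] {a₃ a₂ a₁ a₀ b c d : R}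
    (h : X ^ 4 + C a₃ * X ^ 3 + C a₂ * X ^ 2 + C a₁ * X + C a₀ =
      X ^ 4 + C b * X ^ 2 + C c * X + C d) :
    a₃ = 0 ∧ a₂ = b ∧ a₁ = c ∧ a₀ = d := by
  have h k := congrArg (coeff · k) h
  simp only [coeff_add, coeff_C_mul, coeff_X_pow, coeff_X, coeff_C] at h
  refine ⟨?_, ?_, ?_, ?_⟩
  · simpa using h 3
  · simpa using h 2
  · simpa using h 1
  · simpa using h 0

/-- `X ^ 4 + b X ^ 2 + c X + d` is `(X - t) ^ 3 * (X + 3 t)` or `(X - t) ^ 2 * (X + t) ^ 2`. -/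
def IsTwoRootDepressedQuartic {R : Type*} [CommRing R] (b c d : R) : Prop :=
  ∃ t, (b = -6 * t ^ 2 ∧ c = 8 * t ^ 3 ∧ d = -3 * t ^ 4) ∨ (b = -2 * t ^ 2 ∧ c = 0 ∧ d = t ^ 4)

theorem isTwoRootDepressedQuartic_of_pow_mul_pow_eq {L : Type*} [Field L] (h2 : (2 : L) ≠ 0)
    {r s b c d : L} {m n : ℕ} (hmn : m + n = 4)
    (h : (X - C r) ^ m * (X - C s) ^ n = X ^ 4 + C b * X ^ 2 + C c * X + C d) :
    IsTwoRootDepressedQuartic b c d := by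
  wlog hnm : n ≤ m generalizing r s m n
  · exact this (by omega) ((mul_comm _ _).trans h) (by omega)
  obtain ⟨rfl, rfl⟩ | ⟨rfl, rfl⟩ | ⟨rfl, rfl⟩ :
      (m = 4 ∧ n = 0) ∨ (m = 3 ∧ n = 1) ∨ (m = 2 ∧ n = 2) := by omega
  · rw [show (X - C r) ^ 4 * (X - C s) ^ 0 = X ^ 4 + C (-(4 * r)) * X ^ 3
        + C (6 * r ^ 2) * X ^ 2 + C (-(4 * r ^ 3)) * X + C (r ^ 4) by
      simp only [map_neg, map_mul, map_pow, map_ofNat]; ring] at h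
    obtain ⟨e₃, e₂, e₁, e₀⟩ := coeffs_eq_of_quartic_eq h
    obtain rfl : r = 0 := by
      simpa [h2] using (show 2 * (2 * r) = 0 by linear_combination -e₃)
    exact ⟨0, .inl ⟨by simp [← e₂], by simp [← e₁], by simp [← e₀]⟩⟩
  · rw [show (X - C r) ^ 3 * (X - C s) ^ 1 = X ^ 4 + C (-(3 * r + s)) * X ^ 3
        + C (3 * r ^ 2 + 3 * r * s) * X ^ 2 + C (-(r ^ 3 + 3 * r ^ 2 * s)) * X + C (r ^ 3 * s) by
      simp only [map_neg, map_add, map_mul, map_pow, map_ofNat]; ring] at h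
    obtain ⟨e₃, e₂, e₁, e₀⟩ := coeffs_eq_of_quartic_eq h
    obtain rfl : s = -3 * r := by linear_combination -e₃
    exact ⟨r, .inl ⟨by linear_combination -e₂, by linear_combination -e₁,
      by linear_combination -e₀⟩⟩
  · rw [show (X - C r) ^ 2 * (X - C s) ^ 2 = X ^ 4 + C (-(2 * r + 2 * s)) * X ^ 3
        + C (r ^ 2 + 4 * r * s + s ^ 2) * X ^ 2 + C (-(2 * r ^ 2 * s + 2 * r * s ^ 2)) * X
        + C (r ^ 2 * s ^ 2) by
      simp only [map_neg, map_add, map_mul, map_pow, map_ofNat]; ring] at h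
    obtain ⟨e₃, e₂, e₁, e₀⟩ := coeffs_eq_of_quartic_eq h
    obtain rfl : s = -r := by
      have : r + s = 0 := by simpa [h2] using (show 2 * (r + s) = 0 by linear_combination -e₃)
      linear_combination this
    exact ⟨r, .inr ⟨by linear_combination -e₂, by linear_combination -e₁,
      by linear_combination -e₀⟩⟩

namespace IsTwoRootDepressedQuartic

variable {L : Type*} [Field L] {b c d : L}

theorem sq_eq_four_mul (h2 : (2 : L) ≠ 0) (h : IsTwoRootDepressedQuartic b c d) (hc : c = 0) :
    b ^ 2 = 4 * d := by
  obtain ⟨t, ⟨rfl, rfl, rfl⟩ | ⟨rfl, -, rfl⟩⟩ := h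
  · obtain rfl : t = 0 := by
      have h8 : (8 : L) ≠ 0 := by
        rw [show (8 : L) = 2 ^ 3 by norm_num]
        exact pow_ne_zero 3 h2
      simpa [h8] using hc
    ring
  · ring

theorem eq_zero_of_eq_zero (h2 : (2 : L) ≠ 0) (h3 : (3 : L) ≠ 0)
    (h : IsTwoRootDepressedQuartic b c d) (hb : b = 0) : c = 0 := by
  obtain ⟨t, ⟨rfl, rfl, -⟩ | ⟨-, rfl, -⟩⟩ := h
  · obtain rfl : t = 0 := by
      have h6 : (6 : L) ≠ 0 := by
        rw [show (6 : L) = 2 * 3 by norm_num]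
        exact mul_ne_zero h2 h3
      simpa [h6] using hb
    ring
  · rfl

end IsTwoRootDepressedQuartic

/-- Let `char K ≠ 2, 3` and `M` a `4×4` matrix with characteristic polynomial
`t⁴ + b t² + c t + d` having at most two distinct roots in an algebraic closure. Then
(a) `c = 0 → b² = 4d`; (b) `b = 0 → c = 0`. -/
theorem stmt13 {K : Type*} [Field K] (h2 : (2 : K) ≠ 0) (h3 : (3 : K) ≠ 0)
    (M : Matrix (Fin 4) (Fin 4) K) (b c d : K)
    (hcp : Matrix.charpoly M = X ^ 4 + C b * X ^ 2 + C c * X + C d)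
    (hspec : {x : AlgebraicClosure K |
        ((Matrix.charpoly M).map (algebraMap K (AlgebraicClosure K))).IsRoot x}.ncard ≤ 2) :
    (c = 0 → b ^ 2 = 4 * d) ∧ (b = 0 → c = 0) := by
  set f := algebraMap K (AlgebraicClosure K)
  have hmonic : (M.charpoly.map f).Monic := M.charpoly_monic.map f
  obtain ⟨r, s, m, n, hmn, hfac⟩ :=
    exists_eq_pow_mul_pow_of_ncard_le_two hmonic (IsAlgClosed.splits _) hspec
  rw [M.charpoly_monic.natDegree_map, M.charpoly_natDegree_eq_dim, Fintype.card_fin] at hmn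
  rw [hcp] at hfac
  simp only [Polynomial.map_add, Polynomial.map_mul, Polynomial.map_pow, map_X, map_C] at hfac
  have h2' : (2 : AlgebraicClosure K) ≠ 0 := map_ofNat f 2 ▸ (map_ne_zero f).mpr h2
  have h3' : (3 : AlgebraicClosure K) ≠ 0 := map_ofNat f 3 ▸ (map_ne_zero f).mpr h3
  have hq := isTwoRootDepressedQuartic_of_pow_mul_pow_eq h2' hmn hfac.symm
  refine ⟨fun hc => f.injective ?_, fun hb => f.injective ?_⟩
  · rw [map_pow, map_mul, map_ofNat]
    exact hq.sq_eq_four_mul h2' (by simp [hc])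
  · simpa using hq.eq_zero_of_eq_zero h2' h3' (by simp [hb])
end

section
/- Let K be a field of characteristic 3 and p(t) = t⁴ + at² + bt + c a polynomial over K with at most two distinct roots in an algebraic closure of K. Then there exists u in K with either p(t) = t⁴ + u·t or p(t) = t⁴ - 2u·t² + u². If moreover p has at most one nonzero root in the algebraic closure, then p(t) = t⁴ + v·t for some v in K. -/
/-!
Over the algebraic closure the quartic splits, and since it has no cubic term its roots sum to
zero. With at most two distinct roots the multiset of roots is `{r, r, r, s}` or `{r, r, s, s}`,
and in characteristic 3 the vanishing sum forces `s = 0` or `s = -r` respectively. Hence the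
polynomial is `t (t - r)³ = t⁴ - r³ t` or `(t - r)² (t + r)² = t⁴ + r² t² + r⁴`, the coefficients
descend to `K`, and in the second case `±r` are two distinct nonzero roots (unless `r = 0`).
-/

open Polynomial

theorem Multiset.exists_eq_of_card_eq_four_of_card_toFinset_le_two {α : Type*} [DecidableEq α]
    {m : Multiset α} (h4 : card m = 4) (h2 : m.toFinset.card ≤ 2) :
    ∃ r s, m = {r, r, r, s} ∨ m = {r, r, s, s} := by
  have hsum := m.toFinset_sum_count_eq
  have hm := m.toFinset_sum_count_nsmul_eq
  have hpos : 0 < m.toFinset.card :=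
    Finset.card_pos.mpr (toFinset_nonempty.mpr (card_pos.mp (by omega)))
  obtain hone | htwo : m.toFinset.card = 1 ∨ m.toFinset.card = 2 := by omega
  · obtain ⟨r, hr⟩ := Finset.card_eq_one.mp hone
    rw [hr, Finset.sum_singleton] at hsum hm
    refine ⟨r, r, Or.inl ?_⟩
    rw [← hm, hsum, h4, nsmul_singleton]
    rfl
  · obtain ⟨r, s, hrs, hrs'⟩ := Finset.card_eq_two.mp htwo
    have hr : 0 < count r m := count_pos.mpr (by simp [← mem_toFinset, hrs'])
    have hs : 0 < count s m := count_pos.mpr (by simp [← mem_toFinset, hrs'])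
    rw [hrs', Finset.sum_pair hrs] at hsum hm
    rw [← hm]
    obtain ⟨hr', hs'⟩ | ⟨hr', hs'⟩ | ⟨hr', hs'⟩ :
        count r m = 1 ∧ count s m = 3 ∨ count r m = 2 ∧ count s m = 2 ∨
          count r m = 3 ∧ count s m = 1 := by omega
    · refine ⟨s, r, Or.inl ?_⟩
      rw [hr', hs', add_comm, nsmul_singleton, nsmul_singleton]
      rfl
    · refine ⟨r, s, Or.inr ?_⟩
      rw [hr', hs', nsmul_singleton, nsmul_singleton]
      rfl
    · refine ⟨r, s, Or.inl ?_⟩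
      rw [hr', hs', nsmul_singleton, nsmul_singleton]
      rfl

namespace Polynomial

theorem depressed_quartic_eq_iff {R : Type*} [CommRing R] {a b c a' b' c' : R} :
    X ^ 4 + C a * X ^ 2 + C b * X + C c = X ^ 4 + C a' * X ^ 2 + C b' * X + C c' ↔
      a = a' ∧ b = b' ∧ c = c' := by
  refine ⟨fun h => ⟨?_, ?_, ?_⟩, by rintro ⟨rfl, rfl, rfl⟩; rfl⟩
  · simpa using congrArg (coeff · 2) h
  · simpa using congrArg (coeff · 1) h
  · simpa using congrArg (coeff · 0) h

section CharThree

variable {R : Type*} [CommRing R] [CharP R 3]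

theorem X_sub_C_pow_three_mul_X (r : R) :
    (X - C r) ^ 3 * X = X ^ 4 + C 0 * X ^ 2 + C (-r ^ 3) * X + C 0 := by
  simp only [map_zero, map_neg, map_pow]
  linear_combination X * sub_pow_char X (C r)

theorem X_sub_C_sq_mul_X_add_C_sq (r : R) :
    (X - C r) ^ 2 * (X + C r) ^ 2 = X ^ 4 + C (r ^ 2) * X ^ 2 + C 0 * X + C (r ^ 4) := by
  simp only [map_zero, map_pow]
  linear_combination (-C r ^ 2 * X ^ 2) * CharP.cast_eq_zero R[X] 3

end CharThree

variable {L : Type*} [Field L] [CharP L 3]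

theorem roots_depressed_quartic_of_ncard_roots_le_two [IsAlgClosed L] {a b c : L}
    (h : {x : L | (X ^ 4 + C a * X ^ 2 + C b * X + C c).IsRoot x}.ncard ≤ 2) :
    ∃ r, (X ^ 4 + C a * X ^ 2 + C b * X + C c).roots = {r, r, r, 0} ∨
      (X ^ 4 + C a * X ^ 2 + C b * X + C c).roots = {r, r, -r, -r} := by
  classical
  set q := X ^ 4 + C a * X ^ 2 + C b * X + C c with hq
  have h3 : (3 : L) = 0 := CharP.cast_eq_zero L 3
  have hmonic : q.Monic := by rw [hq]; monicity!
  have hdeg : q.natDegree = 4 := by rw [hq]; compute_degree!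
  have hsum : q.roots.sum = 0 := by
    have hnext : q.nextCoeff = 0 := by
      rw [nextCoeff_of_natDegree_pos (by omega), hdeg, hq]; simp
    rw [← neg_eq_zero, ← (IsAlgClosed.splits q).nextCoeff_eq_neg_sum_roots_of_monic hmonic,
      hnext]
  have hcard : q.roots.toFinset.card ≤ 2 := by
    have hset : {x : L | q.IsRoot x} = q.roots.toFinset := by
      ext x; simp [mem_roots hmonic.ne_zero]
    rwa [hset, Set.ncard_coe_finset] at h
  obtain ⟨r, s, hroots | hroots⟩ := Multiset.exists_eq_of_card_eq_four_of_card_toFinset_le_two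
    (IsAlgClosed.card_roots_eq_natDegree.trans hdeg) hcard
  all_goals
    rw [hroots] at hsum ⊢
    simp only [Multiset.insert_eq_cons, Multiset.sum_cons, Multiset.sum_singleton] at hsum
    refine ⟨r, ?_⟩
  · have hs : s = 0 := by linear_combination hsum - r * h3
    exact Or.inl (by rw [hs])
  · have hs : s = -r := by linear_combination (r + s) * h3 - hsum
    exact Or.inr (by rw [hs])

theorem depressed_quartic_coeffs_of_ncard_roots_le_two [IsAlgClosed L] {a b c : L}
    (h : {x : L | (X ^ 4 + C a * X ^ 2 + C b * X + C c).IsRoot x}.ncard ≤ 2) :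
    (a = 0 ∧ c = 0) ∨ ∃ r ≠ 0, a = r ^ 2 ∧ b = 0 ∧ c = r ^ 4 := by
  set q := X ^ 4 + C a * X ^ 2 + C b * X + C c with hq
  have hprod : q = (q.roots.map (X - C ·)).prod :=
    (IsAlgClosed.splits q).eq_prod_roots_of_monic (by rw [hq]; monicity!)
  obtain ⟨r, hroots | hroots⟩ := roots_depressed_quartic_of_ncard_roots_le_two h
  all_goals
    rw [hroots] at hprod
    simp only [Multiset.insert_eq_cons, Multiset.map_cons, Multiset.map_singleton,
      Multiset.prod_cons, Multiset.prod_singleton] at hprod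
  · have hfac : q = (X - C r) ^ 3 * X := by rw [hprod, map_zero, sub_zero]; ring
    obtain ⟨ha, -, hc⟩ := depressed_quartic_eq_iff.mp (hfac.trans (X_sub_C_pow_three_mul_X r))
    exact Or.inl ⟨ha, hc⟩
  · have hfac : q = (X - C r) ^ 2 * (X + C r) ^ 2 := by rw [hprod, map_neg, sub_neg_eq_add]; ring
    obtain ⟨ha, hb, hc⟩ :=
      depressed_quartic_eq_iff.mp (hfac.trans (X_sub_C_sq_mul_X_add_C_sq r))
    by_cases hr : r = 0
    · exact Or.inl ⟨by simp [ha, hr], by simp [hc, hr]⟩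
    · exact Or.inr ⟨r, hr, ha, hb, hc⟩

theorem one_lt_ncard_nonzero_roots_depressed_quartic {r : L} (hr : r ≠ 0) :
    1 < ({x : L | (X ^ 4 + C (r ^ 2) * X ^ 2 + C 0 * X + C (r ^ 4)).IsRoot x} \ {0}).ncard := by
  have h3 : (3 : L) = 0 := CharP.cast_eq_zero L 3
  have hne : (X ^ 4 + C (r ^ 2) * X ^ 2 + C 0 * X + C (r ^ 4) : L[X]) ≠ 0 :=
    Monic.ne_zero (by monicity!)
  rw [Set.one_lt_ncard_iff ((finite_setOfPred_isRoot hne).sdiff)]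
  refine ⟨r, -r, ⟨?_, hr⟩, ⟨?_, neg_ne_zero.mpr hr⟩, fun h => hr ?_⟩
  · simp only [Set.mem_ofPred_eq, IsRoot.def, eval_add, eval_pow, eval_X, eval_mul, eval_C]
    linear_combination r ^ 4 * h3
  · simp only [Set.mem_ofPred_eq, IsRoot.def, eval_add, eval_pow, eval_X, eval_mul, eval_C]
    linear_combination r ^ 4 * h3
  · linear_combination r * h3 - h

end Polynomial

/-- Over a field of characteristic 3, if `p(t) = t⁴ + a t² + b t + c` has at
most two distinct roots in an algebraic closure, then `p(t) = t⁴ + u t` or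
`p(t) = t⁴ - 2u t² + u²` for some `u ∈ K`; if moreover `p` has at most one nonzero root in
the algebraic closure, then `p(t) = t⁴ + v t` for some `v ∈ K`. -/
theorem stmt14 {K : Type*} [Field K] [CharP K 3] (a b c : K)
    (p : Polynomial K) (hp : p = X ^ 4 + C a * X ^ 2 + C b * X + C c)
    (hroots : {x : AlgebraicClosure K |
        (p.map (algebraMap K (AlgebraicClosure K))).IsRoot x}.ncard ≤ 2) :
    (∃ u : K, p = X ^ 4 + C u * X ∨ p = X ^ 4 - C (2 * u) * X ^ 2 + C (u ^ 2)) ∧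
      (({x : AlgebraicClosure K |
          (p.map (algebraMap K (AlgebraicClosure K))).IsRoot x} \ {0}).ncard ≤ 1 →
        ∃ v : K, p = X ^ 4 + C v * X) := by
  set φ := algebraMap K (AlgebraicClosure K)
  have : CharP (AlgebraicClosure K) 3 := charP_of_injective_algebraMap φ.injective 3
  have hmap : p.map φ = X ^ 4 + C (φ a) * X ^ 2 + C (φ b) * X + C (φ c) := by simp [hp]
  rw [hmap] at hroots ⊢
  obtain ⟨ha, hc⟩ | ⟨r, hr, har, hbr, hcr⟩ :=
    depressed_quartic_coeffs_of_ncard_roots_le_two hroots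
  · have hpb : p = X ^ 4 + C b * X := by
      rw [hp, (map_eq_zero_iff φ φ.injective).mp ha, (map_eq_zero_iff φ φ.injective).mp hc]
      simp
    exact ⟨⟨b, Or.inl hpb⟩, fun _ => ⟨b, hpb⟩⟩
  · have hb₀ : b = 0 := (map_eq_zero_iff φ φ.injective).mp hbr
    have hca : c = a ^ 2 := φ.injective (by rw [hcr, map_pow, har]; ring)
    refine ⟨⟨a, Or.inr ?_⟩, fun h => ?_⟩
    · have h3 : (3 : K) = 0 := CharP.cast_eq_zero K 3
      rw [hp, hb₀, hca, show 2 * a = -a by linear_combination a * h3]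
      simp only [map_neg, map_zero]
      ring
    · rw [har, hbr, hcr] at h
      exact absurd h (one_lt_ncard_nonzero_roots_depressed_quartic hr).not_ge
end

section
/- Let K be a field of characteristic 3, δ ∈ K, and let F_δ be the span in M_3(K) of I_3, A = [[0,1,0],[0,0,0],[1,0,0]], B = [[0,0,0],[0,0,1],[δ,0,0]], and C = [[1,0,1],[-1,0,0],[-1,-δ,-1]]. Then F_δ is spanned by its singular elements. -/
/-- The exceptional space `F_δ ⊆ M_3(K)` in characteristic 3. -/
def Fdelta (K : Type*) [Field K] (δ : K) : Submodule K (Matrix (Fin 3) (Fin 3) K) :=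
  Submodule.span K
    {(1 : Matrix (Fin 3) (Fin 3) K),
      !![0, 1, 0; 0, 0, 0; 1, 0, 0],
      !![0, 0, 0; 0, 0, 1; δ, 0, 0],
      !![1, 0, 1; -1, 0, 0; -1, -δ, -1]}

/-! The four generators `1, A, B, C` of `F_δ` are recovered from the four singular elements
`A`, `B`, `C - B` and `1 + (δ + 1) A + C` of `F_δ`: the rows of `C - B` satisfy `r₂ = -r₁`, and
`1 + (δ + 1) A + C` has third column `(1, 0, 0)` above a minor with proportional columns. -/

theorem Submodule.span_sep_eq_of_subset {R M : Type*} [Semiring R] [AddCommMonoid M]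
    [Module R M] {s : Set M} (p : M → Prop) (h : s ⊆ span R {x ∈ span R s | p x}) :
    span R {x ∈ span R s | p x} = span R s :=
  le_antisymm (span_le.2 fun _ hx => hx.1) (span_le.2 h)

namespace Fdelta

variable {K : Type*} [Field K] (δ : K)

def matA : Matrix (Fin 3) (Fin 3) K := !![0, 1, 0; 0, 0, 0; 1, 0, 0]

def matB : Matrix (Fin 3) (Fin 3) K := !![0, 0, 0; 0, 0, 1; δ, 0, 0]

def matC : Matrix (Fin 3) (Fin 3) K := !![1, 0, 1; -1, 0, 0; -1, -δ, -1]

theorem generators_mem :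
    1 ∈ Fdelta K δ ∧ matA ∈ Fdelta K δ ∧ matB δ ∈ Fdelta K δ ∧ matC δ ∈ Fdelta K δ := by
  have h : {1, matA, matB δ, matC δ} ⊆ (Fdelta K δ : Set _) := Submodule.subset_span
  simp only [Set.insert_subset_iff, Set.singleton_subset_iff, SetLike.mem_coe] at h
  exact h

theorem det_matA : (matA : Matrix (Fin 3) (Fin 3) K).det = 0 := by
  simp [matA, Matrix.det_fin_three]

theorem det_matB : (matB δ).det = 0 := by
  simp [matB, Matrix.det_fin_three]

theorem det_matC_sub_matB : (matC δ - matB δ).det = 0 := by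
  simp [matB, matC, Matrix.det_fin_three]

theorem det_one_add_smul_matA_add_matC : (1 + (δ + 1) • matA + matC δ).det = 0 := by
  simp [matA, matC, Matrix.det_fin_three]

end Fdelta

open Fdelta in
theorem stmt15_general {K : Type*} [Field K] (δ : K) :
    Submodule.span K {M : Matrix (Fin 3) (Fin 3) K | M ∈ Fdelta K δ ∧ M.det = 0} =
      Fdelta K δ := by
  set S := {M : Matrix (Fin 3) (Fin 3) K | M ∈ Fdelta K δ ∧ M.det = 0}
  have mem_span_S {M} (hM : M ∈ Fdelta K δ) (hdet : M.det = 0) : M ∈ Submodule.span K S :=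
    Submodule.subset_span ⟨hM, hdet⟩
  obtain ⟨h1F, hAF, hBF, hCF⟩ := generators_mem δ
  have hA := mem_span_S hAF det_matA
  have hB := mem_span_S hBF (det_matB δ)
  have hC : matC δ ∈ Submodule.span K S := by
    simpa using add_mem (mem_span_S (sub_mem hCF hBF) (det_matC_sub_matB δ)) hB
  have h1 : 1 ∈ Submodule.span K S := by
    have hM := mem_span_S (add_mem (add_mem h1F (Submodule.smul_mem _ (δ + 1) hAF)) hCF)
      (det_one_add_smul_matA_add_matC δ)
    convert sub_mem (sub_mem hM (Submodule.smul_mem _ (δ + 1) hA)) hC using 1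
    abel
  refine Submodule.span_sep_eq_of_subset (s := {1, matA, matB δ, matC δ}) _ ?_
  simp only [Set.insert_subset_iff, Set.singleton_subset_iff]
  exact ⟨h1, hA, hB, hC⟩

/-- `F_δ` is spanned by its singular elements. -/
theorem stmt15 {K : Type*} [Field K] [CharP K 3] (δ : K) :
    Submodule.span K {M : Matrix (Fin 3) (Fin 3) K | M ∈ Fdelta K δ ∧ M.det = 0} =
      Fdelta K δ :=
  stmt15_general δ
end

section
/- Let K be a field of characteristic not 2 with more than 3 elements, and for a,b,c ∈ K and d₁,d₂,d₃ ∈ {0,1} with (d₁,d₂,d₃) not all equal, set A = [[0,1,0],[0,0,0],[a,0,0]], B = [[0,0,0],[0,0,1],[b,0,0]], D = [[d₁,0,0],[0,d₂,0],[c,0,d₃]]. If every matrix in the span of A, B, D has at most two distinct eigenvalues in an algebraic closure of K and char K = 3, then a = b = c = 0. -/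
/-!
The characteristic polynomial of `x • A + y • B + D` is
`(X - d₁)(X - d₂)(X - d₃) - x y (a x + b y + c)`. Since the `dᵢ ∈ {0, 1}` are not all equal,
the cubic part is `(X - α)² (X - β)` with `α ≠ β`, and in characteristic 3 its derivative is
`(β - α)(X - α)`. So subtracting a nonzero constant `s` gives a separable cubic, with three
distinct roots. Hence `x y (a x + b y + c) = 0` for all `x, y`; taking `x, y = ±1` forces
`a = b = c = 0`.
-/

open Polynomial

theorem charpoly_smul_add_smul_add {R : Type*} [CommRing R] (a b c d₁ d₂ d₃ x y : R) :
    (x • !![0, 1, 0; 0, 0, 0; a, 0, 0] + y • !![0, 0, 0; 0, 0, 1; b, 0, 0]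
        + !![d₁, 0, 0; 0, d₂, 0; c, 0, d₃]).charpoly =
      (X - C d₁) * (X - C d₂) * (X - C d₃) - C (x * y * (a * x + b * y + c)) := by
  rw [Matrix.charpoly, Matrix.det_fin_three]
  simp
  ring

theorem exists_X_sub_C_sq_mul_eq_of_not_all_eq {R : Type*} [CommRing R] [Nontrivial R]
    {d₁ d₂ d₃ : R}
    (hd₁ : d₁ = 0 ∨ d₁ = 1) (hd₂ : d₂ = 0 ∨ d₂ = 1) (hd₃ : d₃ = 0 ∨ d₃ = 1)
    (hne : ¬ (d₁ = d₂ ∧ d₂ = d₃)) :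
    ∃ α β : R, α ≠ β ∧ (X - C d₁) * (X - C d₂) * (X - C d₃) = (X - C α) ^ 2 * (X - C β) := by
  rcases hd₁ with rfl | rfl <;> rcases hd₂ with rfl | rfl <;> rcases hd₃ with rfl | rfl
  all_goals first
    | exact absurd ⟨rfl, rfl⟩ hne
    | exact ⟨0, 1, zero_ne_one, by ring1⟩
    | exact ⟨1, 0, one_ne_zero, by ring1⟩

theorem separable_X_sub_C_sq_mul_sub_C {K : Type*} [Field K] [CharP K 3] {α β s : K}
    (hαβ : α ≠ β) (hs : s ≠ 0) : ((X - C α) ^ 2 * (X - C β) - C s).Separable := by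
  set p := (X - C α) ^ 2 * (X - C β) - C s
  have h3 : (3 : K[X]) = 0 := by exact_mod_cast CharP.cast_eq_zero K[X] 3
  have hderiv : derivative p = C (β - α) * (X - C α) := by
    simp only [p, derivative_sub, derivative_mul, derivative_pow, derivative_C, derivative_X,
      C_sub, Nat.cast_ofNat, map_ofNat]
    linear_combination (X - C α) * (X - C β) * h3
  have hroot : ¬ p.IsRoot α := by simpa [p] using hs
  rw [Separable, hderiv,
    isCoprime_mul_unit_left_right (isUnit_C.mpr (sub_ne_zero.mpr hαβ.symm).isUnit)]
  exact ((irreducible_X_sub_C α).coprime_iff_not_dvd.mpr (by rwa [dvd_iff_isRoot])).symm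

theorem ncard_isRoot_map_of_separable {K L : Type*} [Field K] [Field L] [IsAlgClosed L]
    [Algebra K L] {p : K[X]} (hp : p.Separable) :
    {x : L | (p.map (algebraMap K L)).IsRoot x}.ncard = p.natDegree := by
  have hset : {x : L | (p.map (algebraMap K L)).IsRoot x} = p.rootSet L := by
    ext x; simp [mem_rootSet, hp.ne_zero, aeval_def, eval_map]
  rw [hset, ← Nat.card_coe_set_eq, Nat.card_eq_fintype_card,
    card_rootSet_eq_natDegree hp (IsAlgClosed.splits _)]

theorem stmt18_general {K : Type*} [Field K] [CharP K 3]
    (a b c d₁ d₂ d₃ : K)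
    (hd₁ : d₁ = 0 ∨ d₁ = 1) (hd₂ : d₂ = 0 ∨ d₂ = 1) (hd₃ : d₃ = 0 ∨ d₃ = 1)
    (hne : ¬ (d₁ = d₂ ∧ d₂ = d₃))
    (hspec : ∀ M ∈ Submodule.span K
        ({!![0, 1, 0; 0, 0, 0; a, 0, 0], !![0, 0, 0; 0, 0, 1; b, 0, 0],
          !![d₁, 0, 0; 0, d₂, 0; c, 0, d₃]} : Set (Matrix (Fin 3) (Fin 3) K)),
      {x : AlgebraicClosure K |
        ((Matrix.charpoly M).map (algebraMap K (AlgebraicClosure K))).IsRoot x}.ncard ≤ 2) :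
    a = 0 ∧ b = 0 ∧ c = 0 := by
  obtain ⟨α, β, hαβ, hprod⟩ := exists_X_sub_C_sq_mul_eq_of_not_all_eq hd₁ hd₂ hd₃ hne
  have hvanish (x y : K) : x * y * (a * x + b * y + c) = 0 := by
    by_contra hs
    have h := hspec _ <| add_mem (add_mem
      (Submodule.smul_mem _ x (Submodule.subset_span (.inl rfl)))
      (Submodule.smul_mem _ y (Submodule.subset_span (.inr (.inl rfl)))))
      (Submodule.subset_span (.inr (.inr rfl)))
    have hdeg : ((X - C α) ^ 2 * (X - C β) - C (x * y * (a * x + b * y + c))).natDegree = 3 := by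
      compute_degree!
    rw [charpoly_smul_add_smul_add, hprod,
      ncard_isRoot_map_of_separable (separable_X_sub_C_sq_mul_sub_C hαβ hs), hdeg] at h
    omega
  have h3 : (3 : K) = 0 := by exact_mod_cast CharP.cast_eq_zero K 3
  refine ⟨?_, ?_, ?_⟩
  · linear_combination -hvanish 1 1 - hvanish (-1) 1 + a * h3
  · linear_combination -hvanish 1 1 - hvanish 1 (-1) + b * h3
  · linear_combination hvanish (-1) 1 + hvanish 1 (-1) + c * h3

/-- Let `K` be a field of characteristic 3 (in particular not 2) with more than
3 elements, `d₁, d₂, d₃ ∈ {0,1}` not all equal, and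
`A = [[0,1,0],[0,0,0],[a,0,0]]`, `B = [[0,0,0],[0,0,1],[b,0,0]]`,
`D = [[d₁,0,0],[0,d₂,0],[c,0,d₃]]`. If every matrix in `span(A,B,D)` has at most two
distinct eigenvalues in an algebraic closure of `K`, then `a = b = c = 0`. -/
theorem stmt18 {K : Type*} [Field K] (h2 : (2 : K) ≠ 0)
    (hcard : (3 : Cardinal) < Cardinal.mk K) [CharP K 3]
    (a b c d₁ d₂ d₃ : K)
    (hd₁ : d₁ = 0 ∨ d₁ = 1) (hd₂ : d₂ = 0 ∨ d₂ = 1) (hd₃ : d₃ = 0 ∨ d₃ = 1)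
    (hne : ¬ (d₁ = d₂ ∧ d₂ = d₃))
    (hspec : ∀ M ∈ Submodule.span K
        ({!![0, 1, 0; 0, 0, 0; a, 0, 0], !![0, 0, 0; 0, 0, 1; b, 0, 0],
          !![d₁, 0, 0; 0, d₂, 0; c, 0, d₃]} : Set (Matrix (Fin 3) (Fin 3) K)),
      {x : AlgebraicClosure K |
        ((Matrix.charpoly M).map (algebraMap K (AlgebraicClosure K))).IsRoot x}.ncard ≤ 2) :
    a = 0 ∧ b = 0 ∧ c = 0 :=
  stmt18_general a b c d₁ d₂ d₃ hd₁ hd₂ hd₃ hne hspec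
end
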